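/- arXiv:1506.03402 — 7 statements merged into one kernel-verified Lean document; each statement's English description precedes it below -/
import Mathlib

section
/- If u(t·x, y)/u(t·1, 1) → v(x, y) pointwise as t → ∞ for all x ≥ 1 and y ∈ ℝ^{d-1}, where u, v : [1,∞) × ℝ^{d-1} → [0,∞) are measurable with u(·,1) > 0 and v(·,1) > 0, then u(·,1) is regularly varying, i.e. there exists α ∈ ℝ such that u(tx,1)/u(t,1) → x^α for all x ≥ 1, and u(t,y)/u(t,1) → h(y) := v(1,y) for all y. -/
open Filter Topology MeasureTheory


open Pointwise in
lemma additive_measurable_linear (F : ℝ → ℝ) (hF : Measurable F)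
    (hadd : ∀ s t, F (s + t) = F s + F t) : ∃ α : ℝ, ∀ s, F s = α * s := by
  set G : ℝ →+ ℝ := AddMonoidHom.mk' F hadd with hG
  have hrat : ∀ (q : ℚ) (x : ℝ), F (q • x) = q • F x := fun q x => map_rat_smul G q x
  -- boundedness on a set of positive measure
  obtain ⟨n, hn⟩ : ∃ n : ℕ, 0 < volume ({x | |F x| ≤ n} ∩ Set.Icc (0:ℝ) 1) := by
    by_contra h
    push_neg at h
    simp only [nonpos_iff_eq_zero] at h
    have : (⋃ n : ℕ, {x | |F x| ≤ n} ∩ Set.Icc (0:ℝ) 1) = Set.Icc (0:ℝ) 1 := by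
      ext x
      simp only [Set.mem_iUnion, Set.mem_inter_iff, Set.mem_setOf_eq, Set.mem_Icc]
      constructor
      · rintro ⟨n, _, h⟩; exact h
      · intro hx; exact ⟨⌈|F x|⌉₊, Nat.le_ceil _, hx⟩
    have h0 : volume (⋃ n : ℕ, {x | |F x| ≤ n} ∩ Set.Icc (0:ℝ) 1) = 0 :=
      measure_iUnion_null h
    rw [this] at h0
    simp [Real.volume_Icc] at h0
  set E : Set ℝ := {x | |F x| ≤ n} ∩ Set.Icc (0:ℝ) 1 with hE
  have hEmeas : MeasurableSet E :=
    (measurableSet_le hF.abs measurable_const).inter measurableSet_Icc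
  have hsub : E - E ∈ 𝓝 (0:ℝ) :=
    MeasureTheory.Measure.sub_mem_nhds_zero_of_addHaar_pos volume E hEmeas hn
  obtain ⟨δ, hδpos, hδ⟩ := Metric.mem_nhds_iff.1 hsub
  have hbdd : ∀ h : ℝ, |h| < δ → |F h| ≤ 2 * n := by
    intro h hh
    have : h ∈ E - E := hδ (by simpa [Real.dist_eq] using hh)
    obtain ⟨a, ha, b, hb, rfl⟩ := this
    have h1 : F (a - b) = F a - F b := map_sub G a b
    rw [h1]
    calc |F a - F b| ≤ |F a| + |F b| := abs_sub _ _
      _ ≤ n + n := add_le_add ha.1 hb.1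
      _ = 2 * n := by ring
  refine ⟨F 1, fun s => ?_⟩
  set g : ℝ → ℝ := fun x => F x - F 1 * x with hg
  have hgadd : ∀ s t, g (s + t) = g s + g t := by
    intro s t; simp only [hg, hadd]; ring
  have hgrat : ∀ q : ℚ, g q = 0 := by
    intro q
    have : F (q : ℝ) = q * F 1 := by
      have := hrat q 1
      simpa [Rat.smul_def] using this
    simp [hg, this]; ring
  set M : ℝ := 2 * n + |F 1| * δ with hM
  have hgbdd : ∀ x, |g x| ≤ M := by
    intro x
    obtain ⟨q, hq⟩ := exists_rat_near x hδpos
    have hx : x = (x - q) + q := by ring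
    have : g x = g (x - q) := by
      rw [hx, hgadd, hgrat]; ring_nf
    rw [this, hg]
    calc |F (x - q) - F 1 * (x - q)| ≤ |F (x - q)| + |F 1 * (x - q)| := abs_sub _ _
      _ ≤ 2 * n + |F 1| * δ := by
          refine add_le_add (hbdd _ hq) ?_
          rw [abs_mul]
          exact mul_le_mul_of_nonneg_left hq.le (abs_nonneg _)
  -- g is additive and bounded, hence zero
  have hgzero : ∀ x, g x = 0 := by
    intro x
    by_contra hx
    have hxpos : 0 < |g x| := abs_pos.2 hx
    obtain ⟨k, hk⟩ := exists_nat_gt (M / |g x|)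
    have hg0 : g 0 = 0 := by simpa using hgrat 0
    have hknsmul : ∀ j : ℕ, g ((j : ℕ) • x) = (j : ℕ) • g x := by
      intro j
      induction j with
      | zero => simpa using hg0
      | succ j ih => simp only [succ_nsmul, hgadd, ih]
    have h1 : |g (k • x)| ≤ M := hgbdd _
    rw [hknsmul] at h1
    simp only [nsmul_eq_mul, abs_mul, Nat.abs_cast] at h1
    have hM0 : 0 ≤ M := le_trans (abs_nonneg _) (hgbdd 0)
    have : (M / |g x|) < k := hk
    have : M < k * |g x| := (div_lt_iff₀ hxpos).1 hk
    linarith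
  have := hgzero s
  simp only [hg] at this
  linarith

/-- If `u(t·x, y)/u(t·1, 1) → v(x, y)` pointwise as `t → ∞` for all `x ≥ 1` and
`y ∈ ℝ^{d-1}`, where `u, v` are nonnegative measurable with `u(·,1) > 0` and `v(·,1) > 0`, then
`u(·,1)` is regularly varying with some index `α`, and `u(t,y)/u(t,1) → v(1,y)` for all `y`. -/
theorem one_component_rv_characterization {m : ℕ} (u v : ℝ → (Fin m → ℝ) → ℝ)
    (hu_meas : Measurable (Function.uncurry u))
    (hv_meas : Measurable (Function.uncurry v))
    (hu_nonneg : ∀ x y, 1 ≤ x → 0 ≤ u x y)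
    (hv_nonneg : ∀ x y, 1 ≤ x → 0 ≤ v x y)
    (hu_pos : ∀ x, 1 ≤ x → 0 < u x 1)
    (hv_pos : ∀ x, 1 ≤ x → 0 < v x 1)
    (hconv : ∀ x, 1 ≤ x → ∀ y,
      Tendsto (fun t => u (t * x) y / u t 1) atTop (𝓝 (v x y))) :
    (∃ α : ℝ, ∀ x, 1 ≤ x →
      Tendsto (fun t => u (t * x) 1 / u t 1) atTop (𝓝 (x ^ α))) ∧
    (∀ y, Tendsto (fun t => u t y / u t 1) atTop (𝓝 (v 1 y))) := by
  -- Second conclusion first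
  have hsecond : ∀ y, Tendsto (fun t => u t y / u t 1) atTop (𝓝 (v 1 y)) := by
    intro y
    have := hconv 1 le_rfl y
    simpa [mul_one] using this
  refine ⟨?_, hsecond⟩
  -- multiplicativity of v(·,1)
  have hmul : ∀ x y : ℝ, 1 ≤ x → 1 ≤ y → v (x * y) 1 = v x 1 * v y 1 := by
    intro x y hx hy
    have hxy : (1:ℝ) ≤ x * y := le_trans hx (le_mul_of_one_le_right (by linarith) hy)
    have h1 : Tendsto (fun t => u (t * (x * y)) 1 / u t 1) atTop (𝓝 (v (x * y) 1)) :=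
      hconv _ hxy 1
    have htx : Tendsto (fun t : ℝ => t * x) atTop atTop :=
      Tendsto.atTop_mul_const (by linarith : (0:ℝ) < x) tendsto_id
    have h2a : Tendsto (fun t => u (t * x * y) 1 / u (t * x) 1) atTop (𝓝 (v y 1)) :=
      (hconv y hy 1).comp htx
    have h2 : Tendsto (fun t => (u (t * x * y) 1 / u (t * x) 1) * (u (t * x) 1 / u t 1))
        atTop (𝓝 (v y 1 * v x 1)) := h2a.mul (hconv x hx 1)
    have heq : ∀ᶠ t in atTop, (u (t * x * y) 1 / u (t * x) 1) * (u (t * x) 1 / u t 1)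
        = u (t * (x * y)) 1 / u t 1 := by
      filter_upwards [eventually_ge_atTop (1:ℝ)] with t ht
      have htxpos : 0 < u (t * x) 1 := hu_pos _ (le_trans ht (le_mul_of_one_le_right (by linarith) hx))
      rw [mul_assoc] at *
      field_simp
    have h2' : Tendsto (fun t => u (t * (x * y)) 1 / u t 1) atTop (𝓝 (v y 1 * v x 1)) :=
      Tendsto.congr' heq h2
    have := tendsto_nhds_unique h1 h2'
    rw [this]; ring
  -- additive function f on [0, ∞)
  set f : ℝ → ℝ := fun s => Real.log (v (Real.exp s) 1) with hf
  have hvpos' : ∀ s : ℝ, 0 ≤ s → 0 < v (Real.exp s) 1 := fun s hs =>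
    hv_pos _ (Real.one_le_exp hs)
  have hfadd : ∀ s t : ℝ, 0 ≤ s → 0 ≤ t → f (s + t) = f s + f t := by
    intro s t hs ht
    simp only [hf, Real.exp_add]
    rw [hmul _ _ (Real.one_le_exp hs) (Real.one_le_exp ht),
      Real.log_mul (hvpos' s hs).ne' (hvpos' t ht).ne']
  -- well-definedness of the extension
  have hkey : ∀ s a b : ℝ, 0 ≤ a → 0 ≤ s + a → 0 ≤ b → 0 ≤ s + b →
      f (s + a) - f a = f (s + b) - f b := by
    intro s a b ha hsa hb hsb
    have h1 : f (s + a + b) = f (s + a) + f b := hfadd _ _ hsa hb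
    have h2 : f (s + b + a) = f (s + b) + f a := hfadd _ _ hsb ha
    have : s + a + b = s + b + a := by ring
    rw [this, h2] at h1
    linarith
  set F : ℝ → ℝ := fun s => f (s + (1 + |s|)) - f (1 + |s|) with hF
  have hFeq : ∀ s a : ℝ, 0 ≤ a → 0 ≤ s + a → F s = f (s + a) - f a := by
    intro s a ha hsa
    exact hkey s (1 + |s|) a (by positivity)
      (by have := abs_nonneg s; have := neg_abs_le s; linarith) ha hsa
  have hFadd : ∀ s t, F (s + t) = F s + F t := by
    intro s t
    set c : ℝ := 1 + |s| + |t| with hc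
    have hc0 : 0 ≤ c := by positivity
    have hsc : 0 ≤ s + c := by have := neg_abs_le s; have := abs_nonneg t; simp only [hc]; linarith
    have htc : 0 ≤ t + c := by have := neg_abs_le t; have := abs_nonneg s; simp only [hc]; linarith
    have hstc : 0 ≤ s + t + (c + c) := by
      have := neg_abs_le s; have := neg_abs_le t; simp only [hc]; linarith
    have e1 : F s = f (s + c) - f c := hFeq s c hc0 hsc
    have e2 : F t = f (t + c) - f c := hFeq t c hc0 htc
    have e3 : F (s + t) = f (s + t + (c + c)) - f (c + c) :=
      hFeq (s + t) (c + c) (by linarith) hstc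
    have e4 : f (s + t + (c + c)) = f (s + c) + f (t + c) := by
      have : s + t + (c + c) = (s + c) + (t + c) := by ring
      rw [this, hfadd _ _ hsc htc]
    have e5 : f (c + c) = f c + f c := hfadd _ _ hc0 hc0
    rw [e1, e2, e3, e4, e5]; ring
  -- measurability
  have hv1 : Measurable (fun x : ℝ => v x 1) := by
    have : (fun x : ℝ => v x 1) = Function.uncurry v ∘ (fun x => (x, 1)) := rfl
    rw [this]
    exact hv_meas.comp (measurable_id.prodMk measurable_const)
  have hfmeas : Measurable f := (Real.measurable_log.comp hv1).comp Real.measurable_exp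
  have hFmeas : Measurable F := by
    apply Measurable.sub
    · exact hfmeas.comp ((measurable_id.add (measurable_const.add measurable_abs)))
    · exact hfmeas.comp (measurable_const.add measurable_abs)
  obtain ⟨α, hα⟩ := additive_measurable_linear F hFmeas hFadd
  -- f s = α s for s ≥ 0
  have hf0 : f 0 = 0 := by
    have := hfadd 0 0 le_rfl le_rfl
    simpa using this.symm
  have hflin : ∀ s : ℝ, 0 ≤ s → f s = α * s := by
    intro s hs
    have : F s = f s := by
      rw [hFeq s 0 le_rfl (by linarith)]
      simp [hf0]
    rw [← this, hα]
  -- v x 1 = x ^ α for x ≥ 1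
  have hvpow : ∀ x : ℝ, 1 ≤ x → v x 1 = x ^ α := by
    intro x hx
    have hx0 : (0:ℝ) < x := by linarith
    have hlog : 0 ≤ Real.log x := Real.log_nonneg hx
    have h1 : f (Real.log x) = Real.log (v x 1) := by
      simp only [hf, Real.exp_log hx0]
    have h2 : f (Real.log x) = α * Real.log x := hflin _ hlog
    have : Real.log (v x 1) = α * Real.log x := by rw [← h1, h2]
    have hv1pos : 0 < v x 1 := hv_pos x hx
    rw [Real.rpow_def_of_pos hx0, mul_comm, ← this, Real.exp_log hv1pos]
  exact ⟨α, fun x hx => by rw [← hvpow x hx]; exact hconv x hx 1⟩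
end

section
/- Let u : [1,∞) × ℝ^{d-1} → [0,∞) be measurable with u(·,1) > 0 and α > 0. Suppose u(tx,y)/u(t,1) → x^{−α−1} h(y) for all x ≥ 1 and all y (one-component regular variation with index −α−1 and angular limit h, h(1)=1). Define Ū(x,y) = ∫_x^∞ u(z,y) dz (assumed finite). Then t·u(t,y)/Ū(t,1) → α·h(y) as t → ∞, and Ū is one-component regularly varying with index −α and the same angular limit h, i.e. Ū(tx,y)/Ū(t,1) → x^{−α} h(y). -/
/-!
Write `f = u(·, 1)`. The substitution `z = t s` turns `Ū(t, y) / (t f(t))` into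
`∫_1^∞ u(t s, y) / f(t) ds`, whose integrand tends to `s^(-α-1) h(y)`; this integral therefore
tends to `h(y) / α` by dominated convergence. The domination is a Potter bound
`f(t s) ≤ e^(α/2) s^(-1-α/2) f(t)` for large `t` and all `s ≥ 1`, which comes from the uniform
convergence theorem for `k(x) = log f(e^x)`: `k(x + σ) - k(x) → -(α+1) σ` uniformly in
`σ ∈ [0, 1]`. Uniformity is obtained from Egorov's theorem: if it failed along `t_n` at `σ_n`,
pick `x ∈ [0, 1]` outside two small exceptional sets, one for `t_n + σ_n` at `x` and one for `t_n`
at `x + σ_n`, and compare. Both claims are then products of `Ū(·, y) / (t f)` with ratios of `f`.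
-/

open Filter Topology MeasureTheory Set Real

theorem exists_mem_notMem_and_add_notMem {S E F : Set ℝ} (σ : ℝ)
    (h : volume E + volume F < volume S) : ∃ x ∈ S, x ∉ E ∧ x + σ ∉ F := by
  by_contra! hcover
  have hS : S ⊆ E ∪ (· + σ) ⁻¹' F := fun x hx => by
    by_cases hxE : x ∈ E
    · exact Or.inl hxE
    · exact Or.inr (hcover x hx hxE)
  refine ((measure_mono (μ := volume) hS).trans (measure_union_le _ _)).not_gt ?_
  rwa [measure_preimage_add_right]

theorem exists_volume_le_eventually_dist_lt {k : ℝ → ℝ} (hk : Measurable k) {c : ℝ}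
    (hconv : ∀ s, 0 ≤ s → Tendsto (fun t => k (t + s) - k t) atTop (𝓝 (c * s)))
    {r : ℕ → ℝ} (hr : Tendsto r atTop atTop) (a : ℝ) {δ η : ℝ} (hδ : 0 < δ) (hη : 0 < η) :
    ∃ E, volume E ≤ ENNReal.ofReal η ∧
      ∀ᶠ n in atTop, ∀ x ∈ Icc 0 a \ E, dist (k (r n + x) - k (r n)) (c * x) < δ := by
  obtain ⟨E, -, -, hE, hunif⟩ := tendstoUniformlyOn_of_ae_tendsto (μ := volume)
    (f := fun n x => k (r n + x) - k (r n)) (g := fun x => c * x)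
    (fun n => ((hk.comp (measurable_const_add _)).sub_const _).stronglyMeasurable)
    (measurable_const_mul c).stronglyMeasurable measurableSet_Icc
    (by simp) (ae_of_all _ fun x hx => (hconv x hx.1).comp hr) hη
  refine ⟨E, hE, ?_⟩
  filter_upwards [Metric.tendstoUniformlyOn_iff.mp hunif δ hδ] with n hn x hx
  rw [dist_comm]
  exact hn x hx

theorem tendstoUniformlyOn_sub_of_tendsto_sub {k : ℝ → ℝ} (hk : Measurable k) {c : ℝ}
    (hconv : ∀ s, 0 ≤ s → Tendsto (fun t => k (t + s) - k t) atTop (𝓝 (c * s))) :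
    TendstoUniformlyOn (fun t σ => k (t + σ) - k t) (fun σ => c * σ) atTop (Icc 0 1) := by
  rw [Metric.tendstoUniformlyOn_iff]
  intro ε hε
  by_contra hbad
  choose t ht hbad using fun n : ℕ => frequently_atTop.mp (not_eventually.mp hbad) n
  push Not at hbad
  choose σ hσ hσbad using hbad
  have htt : Tendsto t atTop atTop := tendsto_atTop_mono ht tendsto_natCast_atTop_atTop
  have hst : Tendsto (fun n => t n + σ n) atTop atTop :=
    tendsto_atTop_mono (fun n => le_add_of_nonneg_right (hσ n).1) htt
  obtain ⟨E, hE, hEv⟩ := exists_volume_le_eventually_dist_lt hk hconv htt 2 (half_pos hε)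
    (by norm_num : (0 : ℝ) < 1 / 3)
  obtain ⟨F, hF, hFv⟩ := exists_volume_le_eventually_dist_lt hk hconv hst 1 (half_pos hε)
    (by norm_num : (0 : ℝ) < 1 / 3)
  obtain ⟨n, hEn, hFn⟩ := (hEv.and hFv).exists
  have hvol : volume F + volume E < volume (Icc (0 : ℝ) 1) := by
    calc volume F + volume E ≤ ENNReal.ofReal (1 / 3) + ENNReal.ofReal (1 / 3) := add_le_add hF hE
      _ < volume (Icc (0 : ℝ) 1) := by
        rw [Real.volume_Icc, ← ENNReal.ofReal_add (by norm_num) (by norm_num)]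
        exact (ENNReal.ofReal_lt_ofReal_iff (by norm_num)).mpr (by norm_num)
  obtain ⟨x, hx, hxF, hxσE⟩ := exists_mem_notMem_and_add_notMem (σ n) hvol
  have hfrom_t := hEn (x + σ n)
    ⟨⟨by linarith [hx.1, (hσ n).1], by linarith [hx.2, (hσ n).2]⟩, hxσE⟩
  have hfrom_s := hFn x ⟨hx, hxF⟩
  have hfar := hσbad n
  rw [show t n + (x + σ n) = t n + σ n + x by ring] at hfrom_t
  rw [Real.dist_eq, abs_lt] at hfrom_t hfrom_s
  rw [Real.dist_eq, le_abs] at hfar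
  rcases hfar with hfar | hfar <;> linarith [hfrom_t.1, hfrom_t.2, hfrom_s.1, hfrom_s.2]

theorem sub_le_of_forall_mem_Icc_sub_le {k : ℝ → ℝ} {c ε T : ℝ} (hε : 0 ≤ ε)
    (hT : ∀ t ≥ T, ∀ σ ∈ Icc (0 : ℝ) 1, k (t + σ) - k t ≤ c * σ + ε) {t s : ℝ} (ht : T ≤ t)
    (hs : 0 ≤ s) : k (t + s) - k t ≤ c * s + (s + 1) * ε := by
  have hsteps : ∀ n : ℕ, ∀ t ≥ T, ∀ s : ℝ, 0 ≤ s → s ≤ n + 1 →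
      k (t + s) - k t ≤ c * s + (n + 1) * ε := by
    intro n
    induction n with
    | zero =>
      intro t ht s hs hs1
      have := hT t ht s ⟨hs, by simpa using hs1⟩
      push_cast
      linarith
    | succ n ih =>
      intro t ht s hs hsn
      have hnε : 0 ≤ (n + 1 : ℝ) * ε := by positivity
      push_cast at hsn ⊢
      rcases le_or_gt s 1 with hs1 | hs1
      · linarith [hT t ht s ⟨hs, hs1⟩]
      · have hfirst := hT t ht 1 ⟨zero_le_one, le_rfl⟩
        have hrest := ih (t + 1) (by linarith) (s - 1) (by linarith) (by linarith)
        rw [show t + 1 + (s - 1) = t + s by ring] at hrest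
        linarith
  have hfloor : ((⌊s⌋₊ : ℝ) + 1) * ε ≤ (s + 1) * ε := by
    gcongr
    exact Nat.floor_le hs
  linarith [hsteps ⌊s⌋₊ t ht s hs (Nat.lt_floor_add_one s).le]

theorem eventually_forall_mul_of_eventually {P : ℝ → Prop} (h : ∀ᶠ t in atTop, P t) :
    ∀ᶠ t in atTop, ∀ x, 1 ≤ x → P (t * x) := by
  obtain ⟨T, hT⟩ := eventually_atTop.mp h
  filter_upwards [eventually_ge_atTop T, eventually_ge_atTop 0] with t hTt ht x hx
  exact hT _ (by nlinarith)

theorem eventually_le_mul_rpow_of_tendsto_div {f : ℝ → ℝ} (hf_meas : Measurable f)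
    (hf_pos : ∀ᶠ t in atTop, 0 < f t) {ρ : ℝ}
    (hf : ∀ x, 1 ≤ x → Tendsto (fun t => f (t * x) / f t) atTop (𝓝 (x ^ ρ)))
    {ε : ℝ} (hε : 0 < ε) :
    ∀ᶠ t in atTop, ∀ x, 1 ≤ x → f (t * x) ≤ exp ε * x ^ (ρ + ε) * f t := by
  set k : ℝ → ℝ := fun s => log (f (exp s))
  have hconv : ∀ s, 0 ≤ s → Tendsto (fun t => k (t + s) - k t) atTop (𝓝 (ρ * s)) := by
    intro s hs
    have hlim := ((continuousAt_log (rpow_pos_of_pos (exp_pos s) ρ).ne').tendsto.comp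
      ((hf (exp s) (one_le_exp hs)).comp tendsto_exp_atTop))
    rw [log_rpow (exp_pos s), log_exp] at hlim
    refine hlim.congr' ?_
    filter_upwards [tendsto_exp_atTop.eventually (eventually_forall_mul_of_eventually hf_pos)]
      with t ht
    have ht1 : 0 < f (exp t) := by simpa using ht 1 le_rfl
    simp only [k, Function.comp, exp_add]
    rw [log_div (ht (exp s) (one_le_exp hs)).ne' ht1.ne']
  have huct := Metric.tendstoUniformlyOn_iff.mp (tendstoUniformlyOn_sub_of_tendsto_sub (k := k)
    (hf_meas.comp measurable_exp).log hconv) ε hε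
  obtain ⟨T, hT⟩ := eventually_atTop.mp huct
  have hT' : ∀ t ≥ T, ∀ σ ∈ Icc (0 : ℝ) 1, k (t + σ) - k t ≤ ρ * σ + ε := fun t ht σ hσ => by
    linarith [(abs_lt.mp (Real.dist_eq _ _ ▸ hT t ht σ hσ)).1]
  filter_upwards [eventually_ge_atTop (exp T), eventually_gt_atTop 0,
    eventually_forall_mul_of_eventually hf_pos] with t hTt ht hft x hx
  have hx0 : 0 < x := by linarith
  have hadd := sub_le_of_forall_mem_Icc_sub_le hε.le hT' ((le_log_iff_exp_le ht).mpr hTt)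
    (log_nonneg hx)
  simp only [k, exp_add, exp_log ht, exp_log hx0] at hadd
  have hft1 : 0 < f t := by simpa using hft 1 le_rfl
  calc f (t * x) = exp (log (f (t * x))) := (exp_log (hft x hx)).symm
    _ ≤ exp (ε + log x * (ρ + ε) + log (f t)) := exp_le_exp.mpr (by linarith)
    _ = exp ε * x ^ (ρ + ε) * f t := by rw [exp_add, exp_add, exp_log hft1, rpow_def_of_pos hx0]

theorem integral_Ioi_one_comp_mul_div {g : ℝ → ℝ} {t : ℝ} (ht : 0 < t) (a : ℝ) :
    ∫ s in Ioi 1, g (t * s) / a = (∫ z in Ici t, g z) / (t * a) := by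
  rw [integral_div, integral_comp_mul_left_Ioi g 1 ht, mul_one, smul_eq_mul,
    ← integral_Ici_eq_integral_Ioi, inv_mul_eq_div, div_div]

theorem tendsto_integral_Ici_div_mul {f g : ℝ → ℝ} (hf_meas : Measurable f)
    (hg_meas : Measurable g) (hf_pos : ∀ᶠ t in atTop, 0 < f t) {α c : ℝ} (hα : 0 < α)
    (hf : ∀ x, 1 ≤ x → Tendsto (fun t => f (t * x) / f t) atTop (𝓝 (x ^ (-α - 1))))
    (hg : ∀ x, 1 ≤ x → Tendsto (fun t => g (t * x) / f t) atTop (𝓝 (x ^ (-α - 1) * c))) :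
    Tendsto (fun t => (∫ z in Ici t, g z) / (t * f t)) atTop (𝓝 (c / α)) := by
  have hgf : Tendsto (fun t => g t / f t) atTop (𝓝 c) := by simpa using hg 1 le_rfl
  have hg_le : ∀ᶠ t in atTop, |g t| ≤ (|c| + 1) * f t := by
    filter_upwards [hgf.abs.eventually_lt_const (lt_add_one |c|), hf_pos] with t hlt hft
    rw [abs_div, abs_of_pos hft, div_lt_iff₀ hft] at hlt
    exact hlt.le
  have hpotter := eventually_le_mul_rpow_of_tendsto_div hf_meas hf_pos hf (half_pos hα)
  let bound : ℝ → ℝ := fun s => (|c| + 1) * exp (α / 2) * s ^ (-α - 1 + α / 2)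
  have hbound : IntegrableOn bound (Ioi 1) :=
    (integrableOn_Ioi_rpow_of_lt (by linarith) one_pos).const_mul _
  have hdct : Tendsto (fun t => ∫ s in Ioi 1, g (t * s) / f t) atTop
      (𝓝 (∫ s in Ioi 1, s ^ (-α - 1) * c)) := by
    refine tendsto_integral_filter_of_dominated_convergence bound (.of_forall fun t =>
      ((hg_meas.comp (measurable_const_mul t)).div_const _).aestronglyMeasurable) ?_ hbound ((ae_restrict_mem measurableSet_Ioi).mono fun s hs => hg s (le_of_lt hs))
    filter_upwards [hpotter, hf_pos, eventually_forall_mul_of_eventually hg_le] with t hpt hft hgt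
    filter_upwards [ae_restrict_mem measurableSet_Ioi] with s hs
    rw [norm_div, Real.norm_eq_abs, Real.norm_eq_abs, abs_of_pos hft, div_le_iff₀ hft]
    calc |g (t * s)| ≤ (|c| + 1) * f (t * s) := hgt s hs.le
      _ ≤ (|c| + 1) * (exp (α / 2) * s ^ (-α - 1 + α / 2) * f t) := by
        gcongr
        exact hpt s hs.le
      _ = bound s * f t := by ring
  have hlimit : ∫ s in Ioi 1, s ^ (-α - 1) * c = c / α := by
    rw [integral_mul_const, integral_Ioi_rpow_of_lt (by linarith) one_pos, one_rpow,
      show -α - 1 + 1 = -α by ring]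
    field_simp
  rw [hlimit] at hdct
  refine hdct.congr' ?_
  filter_upwards [eventually_gt_atTop 0] with t ht
  exact integral_Ioi_one_comp_mul_div ht _

theorem multivariate_karamata_direct_general {m : ℕ} (u : ℝ → (Fin m → ℝ) → ℝ)
    (h : (Fin m → ℝ) → ℝ) (α : ℝ) (hα : 0 < α)
    (hu_meas : Measurable (Function.uncurry u))
    (hu_pos : ∀ x, 1 ≤ x → 0 < u x 1)
    (h1 : h 1 = 1)
    (hRV : ∀ x, 1 ≤ x → ∀ y,
      Tendsto (fun t => u (t * x) y / u t 1) atTop (𝓝 (x ^ (-α - 1) * h y))) :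
    (∀ y, Tendsto (fun t => t * u t y / ∫ z in Set.Ici t, u z 1) atTop
        (𝓝 (α * h y))) ∧
    (∀ x, 1 ≤ x → ∀ y,
      Tendsto (fun t => (∫ z in Set.Ici (t * x), u z y) / ∫ z in Set.Ici t, u z 1)
        atTop (𝓝 (x ^ (-α) * h y))) := by
  have hf_pos : ∀ᶠ t in atTop, 0 < u t 1 := (eventually_ge_atTop 1).mono hu_pos
  have hmeas : ∀ y, Measurable fun z => u z y := fun y =>
    hu_meas.comp (measurable_id.prodMk measurable_const)
  have hRV1 : ∀ x, 1 ≤ x → Tendsto (fun t => u (t * x) 1 / u t 1) atTop (𝓝 (x ^ (-α - 1))) :=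
    fun x hx => by simpa [h1] using hRV x hx 1
  have hkaramata : ∀ y, Tendsto (fun t => (∫ z in Ici t, u z y) / (t * u t 1)) atTop
      (𝓝 (h y / α)) := fun y =>
    tendsto_integral_Ici_div_mul (hmeas 1) (hmeas y) hf_pos hα hRV1 (fun x hx => hRV x hx y)
  have hinv : Tendsto (fun t => t * u t 1 / ∫ z in Ici t, u z 1) atTop (𝓝 α) := by
    simpa [h1] using (hkaramata 1).inv₀ (by simp [h1, hα.ne'])
  have hratio : ∀ y, Tendsto (fun t => u t y / u t 1) atTop (𝓝 (h y)) := fun y => by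
    simpa using hRV 1 le_rfl y
  refine ⟨fun y => ?_, fun x hx y => ?_⟩
  · rw [mul_comm α]
    refine ((hratio y).mul hinv).congr' ?_
    filter_upwards [hf_pos] with t ht
    field_simp
  · have hx0 : 0 < x := by linarith
    have hvalue : h y / α * (x * x ^ (-α - 1)) * α = x ^ (-α) * h y := by
      rw [← rpow_one_add' hx0.le (by linarith), show 1 + (-α - 1) = -α by ring]
      field_simp
    have hlim := (((hkaramata y).comp (tendsto_id.atTop_mul_const hx0)).mul
      ((hRV1 x hx).const_mul x)).mul hinv
    rw [hvalue] at hlim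
    refine hlim.congr' ?_
    filter_upwards [hf_pos, eventually_forall_mul_of_eventually hf_pos, eventually_gt_atTop 0]
      with t ht htx ht0
    have htx' := htx x hx
    simp only [Function.comp, id]
    field_simp

/-- Multivariate Karamata theorem, direct implication, `T = id`:
if `u(tx,y)/u(t,1) → x^{−α−1} h(y)` (`α > 0`, `h(1) = 1`) and
`Ū(x,y) = ∫_x^∞ u(z,y) dz` is finite, then `t·u(t,y)/Ū(t,1) → α·h(y)` and
`Ū(tx,y)/Ū(t,1) → x^{−α} h(y)`. -/
theorem multivariate_karamata_direct {m : ℕ} (u : ℝ → (Fin m → ℝ) → ℝ)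
    (h : (Fin m → ℝ) → ℝ) (α : ℝ) (hα : 0 < α)
    (hu_meas : Measurable (Function.uncurry u))
    (hu_nonneg : ∀ x y, 1 ≤ x → 0 ≤ u x y)
    (hu_pos : ∀ x, 1 ≤ x → 0 < u x 1)
    (h1 : h 1 = 1)
    (hint : ∀ x, 1 ≤ x → ∀ y, IntegrableOn (fun z => u z y) (Set.Ici x))
    (hRV : ∀ x, 1 ≤ x → ∀ y,
      Tendsto (fun t => u (t * x) y / u t 1) atTop (𝓝 (x ^ (-α - 1) * h y))) :
    (∀ y, Tendsto (fun t => t * u t y / ∫ z in Set.Ici t, u z 1) atTop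
        (𝓝 (α * h y))) ∧
    (∀ x, 1 ≤ x → ∀ y,
      Tendsto (fun t => (∫ z in Set.Ici (t * x), u z y) / ∫ z in Set.Ici t, u z 1)
        atTop (𝓝 (x ^ (-α) * h y))) :=
  multivariate_karamata_direct_general u h α hα hu_meas hu_pos h1 hRV
end

section
/- Let u : [1,∞) × ℝ^{d-1} → [0,∞) be measurable with u(·,1) > 0, α > 0, and Ū(x,y) = ∫_x^∞ u(z,y) dz finite for all x, y. If t·u(t,y)/Ū(t,1) → α·h(y) for all y (with h(1) = 1), then u(tx,y)/u(t,1) → x^{−α−1} h(y) for all x ≥ 1 and all y, and moreover Ū(x,1) = Ū(1,1)·exp(−∫_1^x a(z)/z dz) for a measurable function a with a(t) → α. -/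
open Filter Topology MeasureTheory

namespace KaramataAux
open Set

noncomputable def W (v : ℝ → ℝ) (z : ℝ) : ℝ :=
  (∫ t in Set.Ici (1:ℝ), v t) - ∫ t in (1:ℝ)..z, v t

variable {v : ℝ → ℝ}

lemma integrable (h0 : ∀ z, z < 1 → v z = 0) (hint : IntegrableOn v (Set.Ici 1)) :
    Integrable v := by
  rw [← integrableOn_univ, ← Set.Iio_union_Ici (a := (1:ℝ))]
  refine IntegrableOn.union ?_ hint
  exact (integrableOn_zero (s := Set.Iio 1)).congr_fun (fun z hz => (h0 z hz).symm)
    measurableSet_Iio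

lemma W_cont (h0 : ∀ z, z < 1 → v z = 0) (hint : IntegrableOn v (Set.Ici 1)) :
    Continuous (W v) :=
  continuous_const.sub (intervalIntegral.continuous_primitive
    (fun _ _ => (integrable h0 hint).intervalIntegrable) 1)

lemma intervalIntegral_eq (h0 : ∀ z, z < 1 → v z = 0) (hint : IntegrableOn v (Set.Ici 1))
    (a b : ℝ) : ∫ t in a..b, v t = W v a - W v b := by
  have hi := integrable h0 hint
  have h1 : (∫ t in (1:ℝ)..a, v t) + ∫ t in a..b, v t = ∫ t in (1:ℝ)..b, v t :=
    intervalIntegral.integral_add_adjacent_intervals hi.intervalIntegrable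
      hi.intervalIntegrable
  simp only [W]
  linarith

lemma W_anti (h0 : ∀ z, z < 1 → v z = 0) (hnn : ∀ z, 0 ≤ v z)
    (hint : IntegrableOn v (Set.Ici 1)) : Antitone (W v) := by
  intro a b hab
  have := intervalIntegral_eq h0 hint a b
  have hpos : 0 ≤ ∫ t in a..b, v t :=
    intervalIntegral.integral_nonneg hab (fun z _ => hnn z)
  linarith

lemma W_strict (h0 : ∀ z, z < 1 → v z = 0) (hpos : ∀ z, 1 ≤ z → 0 < v z)
    (hint : IntegrableOn v (Set.Ici 1)) {a b : ℝ} (ha : 1 ≤ a) (hab : a < b) :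
    W v b < W v a := by
  have := intervalIntegral_eq h0 hint a b
  have hpos : 0 < ∫ t in a..b, v t := by
    refine intervalIntegral.intervalIntegral_pos_of_pos_on
      (integrable h0 hint).intervalIntegrable (fun z hz => hpos z ?_) hab
    exact ha.trans hz.1.le
  linarith

lemma W_eq (h0 : ∀ z, z < 1 → v z = 0) (hint : IntegrableOn v (Set.Ici 1))
    {z : ℝ} (hz : 1 ≤ z) : W v z = ∫ t in Set.Ici z, v t := by
  have hsplit : Set.Ici (1:ℝ) = Set.Icc 1 z ∪ Set.Ioi z := (Set.Icc_union_Ioi_eq_Ici hz).symm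
  have hdisj : Disjoint (Set.Icc (1:ℝ) z) (Set.Ioi z) := by
    rw [Set.disjoint_left]
    intro a ha ha'
    exact absurd ha.2 (not_le.mpr ha')
  have : (∫ t in Set.Ici (1:ℝ), v t) = (∫ t in Set.Icc 1 z, v t) + ∫ t in Set.Ioi z, v t := by
    rw [hsplit]
    exact setIntegral_union hdisj measurableSet_Ioi
      (hint.mono_set (by rw [hsplit]; exact Set.subset_union_left))
      (hint.mono_set (by rw [hsplit]; exact Set.subset_union_right))
  have h2 : (∫ t in (1:ℝ)..z, v t) = ∫ t in Set.Icc 1 z, v t := by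
    rw [intervalIntegral.integral_of_le hz, integral_Icc_eq_integral_Ioc]
  have h3 : (∫ t in Set.Ici z, v t) = ∫ t in Set.Ioi z, v t := integral_Ici_eq_integral_Ioi
  simp only [W]
  linarith

lemma W_pos (h0 : ∀ z, z < 1 → v z = 0) (hpos : ∀ z, 1 ≤ z → 0 < v z)
    (hint : IntegrableOn v (Set.Ici 1)) (z : ℝ) : 0 < W v z := by
  have hnn : ∀ z, 0 ≤ v z := by
    intro z
    rcases lt_or_ge z 1 with h | h
    · exact (h0 z h).ge
    · exact (hpos z h).le
  have h1 : W v (max z 1 + 1) < W v (max z 1) :=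
    W_strict h0 hpos hint (le_max_right _ _) (by linarith)
  have h2 : W v (max z 1) ≤ W v z := W_anti h0 hnn hint (le_max_left _ _)
  have h3 : 0 ≤ W v (max z 1 + 1) := by
    rw [W_eq h0 hint (by have := le_max_right z 1; linarith)]
    exact setIntegral_nonneg measurableSet_Ici (fun t _ => hnn t)
  linarith

lemma II_vW (h0 : ∀ z, z < 1 → v z = 0) (hpos : ∀ z, 1 ≤ z → 0 < v z)
    (hint : IntegrableOn v (Set.Ici 1)) (a b : ℝ) :
    IntervalIntegrable (fun z => v z / W v z) volume a b := by
  simp only [div_eq_mul_inv]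
  exact ((integrable h0 hint).intervalIntegrable).mul_continuousOn
    (((W_cont h0 hint).inv₀ (fun x => (W_pos h0 hpos hint x).ne')).continuousOn)

lemma key (h0 : ∀ z, z < 1 → v z = 0) (hpos : ∀ z, 1 ≤ z → 0 < v z)
    (hint : IntegrableOn v (Set.Ici 1)) {x : ℝ} (hx : 1 ≤ x) :
    ∫ z in (1:ℝ)..x, v z / W v z = Real.log (W v 1) - Real.log (W v x) := by
  classical
  have hnn : ∀ z, 0 ≤ v z := by
    intro z
    rcases lt_or_ge z 1 with h | h
    · exact (h0 z h).ge
    · exact (hpos z h).le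
  have hWcont : Continuous (W v) := W_cont h0 hint
  have hWanti : Antitone (W v) := W_anti h0 hnn hint
  have hW_pos := W_pos h0 hpos hint
  set c := W v x with hc
  set d := W v 1 with hd
  have hcd : c ≤ d := hWanti hx
  have hc0 : 0 < c := hW_pos x
  have hd0 : 0 < d := hW_pos 1
  -- the "inverse" of W on [1, x]
  set S : ℝ → Set ℝ := fun s => Set.Icc 1 x ∩ {z | s ≤ W v z} with hS
  have hS_closed : ∀ s, IsClosed (S s) :=
    fun s => isClosed_Icc.inter (isClosed_le continuous_const hWcont)
  have hS_ne : ∀ s, s ≤ d → 1 ∈ S s := fun s hs => ⟨⟨le_refl 1, hx⟩, hs⟩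
  have hS_bdd : ∀ s, BddAbove (S s) :=
    fun s => (bddAbove_Icc (a := (1:ℝ)) (b := x)).mono Set.inter_subset_left
  set J : ℝ → ℝ := fun s => sSup (S s) with hJ
  have hJ_mem : ∀ s ∈ Set.Icc c d, J s ∈ S s := fun s hs =>
    (hS_closed s).csSup_mem ⟨1, hS_ne s hs.2⟩ (hS_bdd s)
  have hWJ : ∀ s ∈ Set.Icc c d, W v (J s) = s := by
    intro s hs
    refine le_antisymm ?_ (hJ_mem s hs).2
    by_contra hlt
    push_neg at hlt
    have hJx : J s ≤ x := (hJ_mem s hs).1.2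
    obtain ⟨z, hz, hWz⟩ : ∃ z ∈ Set.Icc (J s) x, W v z = s := by
      have : s ∈ Set.Icc (W v x) (W v (J s)) := ⟨hs.1, hlt.le⟩
      exact intermediate_value_Icc' hJx (hWcont.continuousOn) this
    have hzS : z ∈ S s := ⟨⟨(hJ_mem s hs).1.1.trans hz.1, hz.2⟩, hWz.ge⟩
    have : z ≤ J s := le_csSup (hS_bdd s) hzS
    have : z = J s := le_antisymm this hz.1
    rw [this] at hWz
    exact absurd hWz (ne_of_lt hlt).symm
  have hJ_anti : ∀ s' ∈ Set.Icc c d, ∀ s, s ≤ s' → J s' ≤ J s := by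
    intro s' hs' s hss
    exact csSup_le_csSup (hS_bdd s) ⟨1, hS_ne s' hs'.2⟩ (fun z hz => ⟨hz.1, hss.trans hz.2⟩)
  set ψ : ℝ → ℝ := fun s => ∫ z in (1:ℝ)..(J s), v z / W v z with hψdef
  have hslope : ∀ s ∈ Set.Icc c d, ∀ s' ∈ Set.Icc c d, s ≤ s' →
      (s' - s)/s' ≤ ψ s - ψ s' ∧ ψ s - ψ s' ≤ (s' - s)/s := by
    intro s hs s' hs' hss
    have hs0 : 0 < s := lt_of_lt_of_le hc0 hs.1
    have hs'0 : 0 < s' := lt_of_lt_of_le hc0 hs'.1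
    have hJss : J s' ≤ J s := hJ_anti s' hs' s hss
    have hint2 : ∫ z in (J s')..(J s), v z / W v z = ψ s - ψ s' := by
      have h := intervalIntegral.integral_add_adjacent_intervals
        (II_vW h0 hpos hint 1 (J s')) (II_vW h0 hpos hint (J s') (J s))
      simp only [hψdef]
      linarith
    have hWub : ∀ z ∈ Set.Icc (J s') (J s), W v z ≤ s' := by
      intro z hz
      calc W v z ≤ W v (J s') := hWanti hz.1
        _ = s' := hWJ s' hs'
    have hWlb : ∀ z ∈ Set.Icc (J s') (J s), s ≤ W v z := by
      intro z hz
      calc s = W v (J s) := (hWJ s hs).symm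
        _ ≤ W v z := hWanti hz.2
    have hIv : ∫ z in (J s')..(J s), v z = s' - s := by
      rw [intervalIntegral_eq h0 hint, hWJ s' hs', hWJ s hs]
    constructor
    · rw [← hint2]
      have hmono : ∫ z in (J s')..(J s), v z / s' ≤ ∫ z in (J s')..(J s), v z / W v z := by
        apply intervalIntegral.integral_mono_on hJss
          (((integrable h0 hint).intervalIntegrable).div_const s')
          (II_vW h0 hpos hint _ _)
        intro z hz
        exact div_le_div_of_nonneg_left (hnn z) (hW_pos z) (hWub z hz)
      rw [intervalIntegral.integral_div, hIv] at hmono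
      exact hmono
    · rw [← hint2]
      have hmono : ∫ z in (J s')..(J s), v z / W v z ≤ ∫ z in (J s')..(J s), v z / s := by
        apply intervalIntegral.integral_mono_on hJss (II_vW h0 hpos hint _ _)
          (((integrable h0 hint).intervalIntegrable).div_const s)
        intro z hz
        exact div_le_div_of_nonneg_left (hnn z) hs0 (hWlb z hz)
      rw [intervalIntegral.integral_div, hIv] at hmono
      exact hmono
  -- the derivative of ψ
  have hderiv : ∀ s ∈ Set.Icc c d, HasDerivWithinAt ψ (-s⁻¹) (Set.Icc c d) s := by
    intro s hs
    have hs0 : 0 < s := lt_of_lt_of_le hc0 hs.1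
    rw [hasDerivWithinAt_iff_tendsto]
    have hbound : ∀ s' ∈ Set.Icc c d,
        ‖ψ s' - ψ s - (s' - s) • (-s⁻¹)‖ ≤ (s' - s)^2 / c^2 := by
      intro s' hs'
      have hs'0 : 0 < s' := lt_of_lt_of_le hc0 hs'.1
      have hkey1 : ∀ p q : ℝ, c ≤ p → c ≤ q → p ≤ q →
          (q - p)/p - (q - p)/q ≤ (q - p)^2 / c^2 := by
        intro p q hp hq hpq
        have hp0 : 0 < p := lt_of_lt_of_le hc0 hp
        have hq0 : 0 < q := lt_of_lt_of_le hc0 hq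
        rw [div_sub_div _ _ hp0.ne' hq0.ne']
        have hnum : (q - p) * q - p * (q - p) = (q - p)^2 := by ring
        rw [hnum]
        apply div_le_div_of_nonneg_left (sq_nonneg _) (by positivity)
        nlinarith
      rw [smul_eq_mul, Real.norm_eq_abs, abs_le]
      rcases le_total s s' with hss | hss
      · obtain ⟨h1, h2⟩ := hslope s hs s' hs' hss
        have hk := hkey1 s s' hs.1 hs'.1 hss
        have hE : ψ s' - ψ s - (s' - s) * (-s⁻¹) = (s' - s)/s - (ψ s - ψ s') := by
          field_simp
          try ring
        rw [hE]
        have hpos2 : (0:ℝ) ≤ (s' - s)^2 / c^2 := by positivity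
        constructor <;> linarith
      · obtain ⟨h1, h2⟩ := hslope s' hs' s hs hss
        have hk := hkey1 s' s hs'.1 hs.1 hss
        have hE : ψ s' - ψ s - (s' - s) * (-s⁻¹) = (ψ s' - ψ s) - (s - s')/s := by
          field_simp
          try ring
        rw [hE]
        have hsq : (s - s')^2 = (s' - s)^2 := by ring
        rw [hsq] at hk
        have hpos2 : (0:ℝ) ≤ (s' - s)^2 / c^2 := by positivity
        constructor <;> linarith
    have hsqz : Tendsto (fun s' => ‖s' - s‖ / c^2) (𝓝[Set.Icc c d] s) (𝓝 0) := by
      have hcont : Continuous fun s' : ℝ => ‖s' - s‖ / c^2 :=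
        ((continuous_id.sub continuous_const).norm).div_const _
      have := hcont.tendsto s
      simp only [sub_self, norm_zero, zero_div] at this
      exact this.mono_left nhdsWithin_le_nhds
    refine squeeze_zero' (Filter.Eventually.of_forall fun t => by positivity) ?_ hsqz
    filter_upwards [self_mem_nhdsWithin] with s' hs'
    calc ‖s' - s‖⁻¹ * ‖ψ s' - ψ s - (s' - s) • (-s⁻¹)‖
        ≤ ‖s' - s‖⁻¹ * ((s' - s)^2 / c^2) := by
          apply mul_le_mul_of_nonneg_left (hbound s' hs')
          exact inv_nonneg.mpr (norm_nonneg _)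
      _ = ‖s' - s‖ / c^2 := by
          rw [Real.norm_eq_abs, ← sq_abs]
          rcases eq_or_ne (s' - s) 0 with hz | hz
          · simp [hz]
          · have hne : |s' - s| ≠ 0 := abs_ne_zero.mpr hz
            rw [pow_two, ← mul_div_assoc, ← mul_assoc, inv_mul_cancel₀ hne, one_mul]
  have hψcont : ContinuousOn ψ (Set.Icc c d) := fun s hs => (hderiv s hs).continuousWithinAt
  have hint' : IntervalIntegrable (fun s : ℝ => -s⁻¹) volume c d := by
    apply ContinuousOn.intervalIntegrable
    apply ContinuousOn.neg
    apply ContinuousOn.inv₀ continuousOn_id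
    intro z hz
    rw [Set.uIcc_of_le hcd] at hz
    exact (lt_of_lt_of_le hc0 hz.1).ne'
  have hFTC : ∫ s in c..d, -s⁻¹ = ψ d - ψ c := by
    apply intervalIntegral.integral_eq_sub_of_hasDeriv_right_of_le hcd hψcont _ hint'
    intro s hs
    refine (hderiv s ⟨hs.1.le, hs.2.le⟩).mono_of_mem_nhdsWithin ?_
    refine Filter.mem_of_superset (Ioc_mem_nhdsGT_of_mem ⟨le_refl s, hs.2⟩) ?_
    exact fun t ht => ⟨hs.1.le.trans ht.1.le, ht.2⟩
  have hJd : J d = 1 := by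
    have hdm : d ∈ Set.Icc c d := ⟨hcd, le_refl d⟩
    have h1J : 1 ≤ J d := (hJ_mem d hdm).1.1
    refine le_antisymm ?_ h1J
    by_contra hgt
    push_neg at hgt
    have hlt : W v (J d) < W v 1 := W_strict h0 hpos hint (le_refl 1) hgt
    rw [hWJ d hdm] at hlt
    exact lt_irrefl _ (hlt.trans_le (le_refl d))
  have hJc : J c = x := by
    have hcm : c ∈ Set.Icc c d := ⟨le_refl c, hcd⟩
    have hxS : x ∈ S c := ⟨⟨hx, le_refl x⟩, le_refl c⟩
    exact le_antisymm (hJ_mem c hcm).1.2 (le_csSup (hS_bdd c) hxS)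
  have hψd : ψ d = 0 := by
    simp only [hψdef, hJd, intervalIntegral.integral_same]
  have hψc : ψ c = ∫ z in (1:ℝ)..x, v z / W v z := by
    simp only [hψdef, hJc]
  have hLHS : ∫ s in c..d, -s⁻¹ = Real.log c - Real.log d := by
    rw [intervalIntegral.integral_neg, integral_inv (by
      rw [Set.uIcc_of_le hcd]
      intro hmem
      exact absurd hmem.1 (not_le.mpr hc0))]
    rw [Real.log_div hd0.ne' hc0.ne']
    ring
  rw [hLHS, hψd, hψc] at hFTC
  linarith

end KaramataAux

open KaramataAux in
/-- Multivariate Karamata theorem, converse implication, `T = id`: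
if `t·u(t,y)/Ū(t,1) → α·h(y)` for all `y` (`α > 0`, `h(1) = 1`), where
`Ū(x,y) = ∫_x^∞ u(z,y) dz` is finite, then `u(tx,y)/u(t,1) → x^{−α−1} h(y)` and
`Ū(x,1) = Ū(1,1)·exp(−∫_1^x a(z)/z dz)` for a measurable `a` with `a(t) → α`. -/
theorem multivariate_karamata_converse {m : ℕ} (u : ℝ → (Fin m → ℝ) → ℝ)
    (h : (Fin m → ℝ) → ℝ) (α : ℝ) (hα : 0 < α)
    (hu_meas : Measurable (Function.uncurry u))
    (hu_nonneg : ∀ x y, 1 ≤ x → 0 ≤ u x y)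
    (hu_pos : ∀ x, 1 ≤ x → 0 < u x 1)
    (h1 : h 1 = 1)
    (hint : ∀ x, 1 ≤ x → ∀ y, IntegrableOn (fun z => u z y) (Set.Ici x))
    (hKar : ∀ y, Tendsto (fun t => t * u t y / ∫ z in Set.Ici t, u z 1) atTop
      (𝓝 (α * h y))) :
    (∀ x, 1 ≤ x → ∀ y,
      Tendsto (fun t => u (t * x) y / u t 1) atTop (𝓝 (x ^ (-α - 1) * h y))) ∧
    (∃ a : ℝ → ℝ, Measurable a ∧ Tendsto a atTop (𝓝 α) ∧
      ∀ x, 1 ≤ x →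
        (∫ z in Set.Ici x, u z 1) =
          (∫ z in Set.Ici (1:ℝ), u z 1) * Real.exp (-∫ z in (1:ℝ)..x, a z / z)) := by
  classical
  set v : ℝ → ℝ := fun z => if 1 ≤ z then u z 1 else 0 with hvdef
  have h0 : ∀ z, z < 1 → v z = 0 := fun z hz => if_neg (not_le.mpr hz)
  have hveq : ∀ z, 1 ≤ z → v z = u z 1 := fun z hz => if_pos hz
  have hvpos : ∀ z, 1 ≤ z → 0 < v z := fun z hz => (hveq z hz) ▸ hu_pos z hz
  have hv_int : IntegrableOn v (Set.Ici 1) :=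
    (hint 1 le_rfl 1).congr_fun (fun z hz => (hveq z hz).symm) measurableSet_Ici
  have hv_meas : Measurable v := by
    apply Measurable.ite measurableSet_Ici _ measurable_const
    exact hu_meas.comp (measurable_id.prodMk measurable_const)
  have hW_pos := W_pos h0 hvpos hv_int
  have hWeq : ∀ x : ℝ, 1 ≤ x → (∫ z in Set.Ici x, u z 1) = W v x := by
    intro x hx
    rw [W_eq h0 hv_int hx]
    exact setIntegral_congr_fun measurableSet_Ici
      (fun z hz => (hveq z (hx.trans hz)).symm)
  set a : ℝ → ℝ := fun z => if 1 ≤ z then z * v z / W v z else α with hadef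
  have ha_meas : Measurable a := by
    apply Measurable.ite measurableSet_Ici _ measurable_const
    exact (measurable_id.mul hv_meas).div (W_cont h0 hv_int).measurable
  have ha_div : ∀ z : ℝ, 1 ≤ z → a z / z = v z / W v z := by
    intro z hz
    have hz0 : z ≠ 0 := by linarith
    rw [hadef]
    simp only [if_pos hz]
    rw [div_div, mul_comm (W v z) z, mul_div_mul_left _ _ hz0]
  have ha_tendsto : Tendsto a atTop (𝓝 α) := by
    have h1' := hKar 1
    rw [h1, mul_one] at h1'
    apply h1'.congr'
    filter_upwards [eventually_ge_atTop (1:ℝ)] with t ht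
    rw [hadef]
    simp only [if_pos ht]
    rw [hveq t ht, hWeq t ht]
  have hrep : ∀ x : ℝ, 1 ≤ x → (∫ z in Set.Ici x, u z 1) =
      (∫ z in Set.Ici (1:ℝ), u z 1) * Real.exp (-∫ z in (1:ℝ)..x, a z / z) := by
    intro x hx
    have hkey := key h0 hvpos hv_int hx
    have hcongr : ∫ z in (1:ℝ)..x, a z / z = ∫ z in (1:ℝ)..x, v z / W v z := by
      apply intervalIntegral.integral_congr
      intro z hz
      rw [Set.uIcc_of_le hx] at hz
      exact ha_div z hz.1
    rw [hWeq x hx, hWeq 1 le_rfl, hcongr, hkey, neg_sub,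
      Real.exp_sub, Real.exp_log (hW_pos x), Real.exp_log (hW_pos 1),
      mul_comm (W v 1), div_mul_cancel₀ _ (hW_pos 1).ne']
  have hIIa : ∀ p q : ℝ, 1 ≤ p → p ≤ q → IntervalIntegrable (fun z => a z / z) volume p q := by
    intro p q hp hpq
    rw [intervalIntegrable_iff_integrableOn_Ioc_of_le hpq]
    have hII := II_vW h0 hvpos hv_int p q
    rw [intervalIntegrable_iff_integrableOn_Ioc_of_le hpq] at hII
    exact hII.congr_fun (fun z hz => (ha_div z (hp.trans hz.1.le)).symm) measurableSet_Ioc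
  have hInt_tendsto : ∀ x : ℝ, 1 ≤ x →
      Tendsto (fun t => ∫ z in t..(t*x), a z / z) atTop (𝓝 (α * Real.log x)) := by
    intro x hx
    have hx0 : (0:ℝ) < x := lt_of_lt_of_le one_pos hx
    have hlx : 0 ≤ Real.log x := Real.log_nonneg hx
    rw [Metric.tendsto_atTop]
    intro ε hε
    set ε' := ε / (Real.log x + 1) with hε'def
    have hε'0 : 0 < ε' := by positivity
    obtain ⟨T, hT⟩ := Metric.tendsto_atTop.mp ha_tendsto ε' hε'0
    refine ⟨max T 1, fun t ht => ?_⟩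
    have ht1 : (1:ℝ) ≤ t := le_trans (le_max_right T 1) ht
    have htT : T ≤ t := le_trans (le_max_left T 1) ht
    have ht0 : (0:ℝ) < t := lt_of_lt_of_le one_pos ht1
    have htx : t ≤ t * x := le_mul_of_one_le_right ht0.le hx
    have hIIc : IntervalIntegrable (fun z : ℝ => α / z) volume t (t*x) := by
      apply ContinuousOn.intervalIntegrable
      apply ContinuousOn.div continuousOn_const continuousOn_id
      intro z hz
      rw [Set.uIcc_of_le htx] at hz
      have : (0:ℝ) < z := lt_of_lt_of_le ht0 hz.1
      exact this.ne'
    have hIIe : IntervalIntegrable (fun z : ℝ => ε' / z) volume t (t*x) := by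
      apply ContinuousOn.intervalIntegrable
      apply ContinuousOn.div continuousOn_const continuousOn_id
      intro z hz
      rw [Set.uIcc_of_le htx] at hz
      exact (lt_of_lt_of_le ht0 hz.1).ne'
    have hIIat := hIIa t (t*x) ht1 htx
    have hlog : ∫ z in t..(t*x), z⁻¹ = Real.log x := by
      rw [integral_inv (by
        rw [Set.uIcc_of_le htx]
        intro hmem
        exact absurd hmem.1 (not_le.mpr ht0))]
      rw [mul_comm, mul_div_assoc, div_self ht0.ne', mul_one]
    have hconst : ∫ z in t..(t*x), α / z = α * Real.log x := by
      simp only [div_eq_mul_inv]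
      rw [intervalIntegral.integral_const_mul, hlog]
    have hconst' : ∫ z in t..(t*x), ε' / z = ε' * Real.log x := by
      simp only [div_eq_mul_inv]
      rw [intervalIntegral.integral_const_mul, hlog]
    have hsub : ∫ z in t..(t*x), a z / z - α / z =
        (∫ z in t..(t*x), a z / z) - ∫ z in t..(t*x), α / z :=
      intervalIntegral.integral_sub hIIat hIIc
    have habs : |∫ z in t..(t*x), a z / z - α / z| ≤ ∫ z in t..(t*x), |a z / z - α / z| := by
      have := intervalIntegral.norm_integral_le_integral_norm
        (f := fun z => a z / z - α / z) (μ := volume) (a := t) (b := t*x) htx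
      simpa [Real.norm_eq_abs] using this
    have hmono : ∫ z in t..(t*x), |a z / z - α / z| ≤ ∫ z in t..(t*x), ε' / z := by
      apply intervalIntegral.integral_mono_on htx (hIIat.sub hIIc).abs hIIe
      intro z hz
      have hz0 : (0:ℝ) < z := lt_of_lt_of_le ht0 hz.1
      have : a z / z - α / z = (a z - α) / z := by field_simp
      rw [this, abs_div, abs_of_pos hz0]
      have hTz := hT z (le_trans htT hz.1)
      rw [Real.dist_eq] at hTz
      gcongr
    have hfinal : |(∫ z in t..(t*x), a z / z) - α * Real.log x| ≤ ε' * Real.log x := by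
      have heq2 : (∫ z in t..(t*x), a z / z) - α * Real.log x
          = ∫ z in t..(t*x), a z / z - α / z := by
        rw [hsub, hconst]
      rw [heq2]
      exact le_trans habs (le_trans hmono hconst'.le)
    rw [Real.dist_eq]
    calc |(∫ z in t..(t*x), a z / z) - α * Real.log x| ≤ ε' * Real.log x := hfinal
      _ < ε := by
        rw [hε'def, div_mul_eq_mul_div, div_lt_iff₀ (by positivity)]
        nlinarith
  have hB : ∀ x : ℝ, 1 ≤ x → Tendsto
      (fun t => (∫ z in Set.Ici (t*x), u z 1) / ∫ z in Set.Ici t, u z 1) atTop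
      (𝓝 (x ^ (-α))) := by
    intro x hx
    have hx0 : (0:ℝ) < x := lt_of_lt_of_le one_pos hx
    have hexp : Tendsto (fun t => Real.exp (-∫ z in t..(t*x), a z / z)) atTop
        (𝓝 (Real.exp (-(α * Real.log x)))) :=
      (Real.continuous_exp.tendsto _).comp (hInt_tendsto x hx).neg
    have hval : Real.exp (-(α * Real.log x)) = x ^ (-α) := by
      rw [Real.rpow_def_of_pos hx0]
      ring_nf
    rw [hval] at hexp
    apply hexp.congr'
    filter_upwards [eventually_ge_atTop (1:ℝ)] with t ht
    have ht0 : (0:ℝ) < t := lt_of_lt_of_le one_pos ht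
    have htx : t ≤ t * x := le_mul_of_one_le_right ht0.le hx
    have htx1 : (1:ℝ) ≤ t * x := le_trans ht htx
    have hadd := intervalIntegral.integral_add_adjacent_intervals
      (hIIa 1 t le_rfl ht) (hIIa t (t*x) ht htx)
    have hI1 : (0:ℝ) < ∫ z in Set.Ici (1:ℝ), u z 1 := by
      rw [hWeq 1 le_rfl]; exact hW_pos 1
    rw [hrep (t*x) htx1, hrep t ht]
    rw [mul_div_mul_left _ _ hI1.ne', ← Real.exp_sub]
    congr 1
    linarith
  refine ⟨?_, a, ha_meas, ha_tendsto, hrep⟩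
  intro x hx y
  have hx0 : (0:ℝ) < x := lt_of_lt_of_le one_pos hx
  have hA : Tendsto (fun t => (t*x) * u (t*x) y / ∫ z in Set.Ici (t*x), u z 1) atTop
      (𝓝 (α * h y)) := (hKar y).comp (tendsto_id.atTop_mul_const hx0)
  have h1' := hKar 1
  rw [h1, mul_one] at h1'
  have hC : Tendsto (fun t => (t * u t 1 / ∫ z in Set.Ici t, u z 1)⁻¹) atTop (𝓝 α⁻¹) :=
    h1'.inv₀ hα.ne'
  have hprod := ((hA.mul (hB x hx)).mul hC).mul_const x⁻¹
  have hval : α * h y * x ^ (-α) * α⁻¹ * x⁻¹ = x ^ (-α - 1) * h y := by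
    have hpow : x ^ (-α - 1) = x ^ (-α) * x⁻¹ := by
      rw [show -α - 1 = -α + (-1) by ring, Real.rpow_add hx0, Real.rpow_neg_one]
    rw [hpow]
    field_simp
  rw [hval] at hprod
  apply hprod.congr'
  filter_upwards [eventually_ge_atTop (1:ℝ)] with t ht
  have ht0 : (0:ℝ) < t := lt_of_lt_of_le one_pos ht
  have htx1 : (1:ℝ) ≤ t * x := le_trans ht (le_mul_of_one_le_right ht0.le hx)
  have hWtx : (0:ℝ) < ∫ z in Set.Ici (t*x), u z 1 := by
    rw [hWeq _ htx1]; exact hW_pos _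
  have hWt : (0:ℝ) < ∫ z in Set.Ici t, u z 1 := by
    rw [hWeq t ht]; exact hW_pos t
  have hut : u t 1 ≠ 0 := (hu_pos t ht).ne'
  show (t*x) * u (t*x) y / (∫ z in Set.Ici (t*x), u z 1) *
      ((∫ z in Set.Ici (t*x), u z 1) / ∫ z in Set.Ici t, u z 1) *
      (t * u t 1 / ∫ z in Set.Ici t, u z 1)⁻¹ * x⁻¹ = u (t * x) y / u t 1
  rw [inv_div]
  field_simp
end

section
/- Let φ and Φ̄ be the density and survival function of a Gaussian distribution N(μ, σ²). Then with T(x) = exp(x²), the function x ↦ φ(x)/T'(x) is T-regularly varying with index −1/(2σ²) − 1, and Φ̄ is T-regularly varying with index −1/(2σ²); that is, Φ̄(T^{-1}(T(t)T(x)))/Φ̄(T^{-1}(T(t))) → T(x)^{−1/(2σ²)} as t → ∞, for all x ≥ 0. -/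
/-!
With `s = √(t² + x²)`, the density ratio is `φ(s)/φ(t) = exp((-x² + 2μ(s - t))/(2σ²))`, and
`s - t = x²/(s + t) → 0`, so it tends to `exp(-x²/(2σ²))`; the factor `t/s` and
`exp(t²)/exp(s²) = exp(-x²)` coming from `T'` give the first limit.

For the survival function, the Mills-ratio asymptotic `Φ̄(t) ∼ σ²φ(t)/(t - μ)` reduces the second
limit to the first computation. It follows from `∫_{z > t} (z - t)ᵏ φ(z) dz ≥ 0` for `k = 1, 2`:
integrating `φ' = -(z - μ)φ/σ²` evaluates the first two tail moments of `φ`, and the two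
inequalities become `(t - μ)Φ̄(t) ≤ σ²φ(t) ≤ ((t - μ)² + σ²)Φ̄(t)/(t - μ)`.
-/

open Filter Topology MeasureTheory

/-- Gaussian probability density with mean `μ` and standard deviation `σ`. -/
noncomputable def gaussPdf (μ σ : ℝ) (x : ℝ) : ℝ :=
  (Real.sqrt (2 * Real.pi * σ ^ 2))⁻¹ * Real.exp (-(x - μ) ^ 2 / (2 * σ ^ 2))

/-- Gaussian survival function. -/
noncomputable def gaussSurv (μ σ : ℝ) (x : ℝ) : ℝ := ∫ z in Set.Ici x, gaussPdf μ σ z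

open Real Set Asymptotics ProbabilityTheory

theorem integral_Ioi_eq_neg_of_hasDerivAt {E : Type*} [NormedAddCommGroup E] [NormedSpace ℝ E]
    [CompleteSpace E] {F F' : ℝ → E} (hF : ∀ x, HasDerivAt F (F' x) x) (hF' : Integrable F')
    (hFint : Integrable F) (a : ℝ) : ∫ x in Ioi a, F' x = -F a := by
  have hlim : Tendsto F atTop (𝓝 0) :=
    tendsto_zero_of_hasDerivAt_of_integrableOn_Ioi (a := a) (fun x _ ↦ hF x)
      hF'.integrableOn hFint.integrableOn
  rw [integral_Ioi_of_hasDerivAt_of_tendsto' (fun x _ ↦ hF x) hF'.integrableOn hlim, zero_sub]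

section Density

variable (μ : ℝ) {σ : ℝ}

lemma gaussPdf_eq_gaussianPDFReal (σ : ℝ) : gaussPdf μ σ = gaussianPDFReal μ (σ ^ 2).toNNReal := by
  ext x
  simp only [gaussPdf, gaussianPDFReal, Real.coe_toNNReal _ (sq_nonneg σ)]

lemma gaussPdf_pos (hσ : σ ≠ 0) (x : ℝ) : 0 < gaussPdf μ σ x := by
  rw [gaussPdf_eq_gaussianPDFReal]
  exact gaussianPDFReal_pos _ _ _ (by simpa using hσ)

lemma gaussPdf_div_gaussPdf (hσ : σ ≠ 0) (x y : ℝ) :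
    gaussPdf μ σ x / gaussPdf μ σ y = exp (((y - μ) ^ 2 - (x - μ) ^ 2) / (2 * σ ^ 2)) := by
  have hc : (√(2 * π * σ ^ 2))⁻¹ ≠ 0 := by positivity
  rw [gaussPdf, gaussPdf, mul_div_mul_left _ _ hc, ← exp_sub]
  congr 1
  ring

lemma hasDerivAt_gaussPdf (σ x : ℝ) :
    HasDerivAt (gaussPdf μ σ) (-((x - μ) / σ ^ 2) * gaussPdf μ σ x) x := by
  have h := (((((hasDerivAt_id x).sub_const μ).pow 2).neg).div_const (2 * σ ^ 2)).exp.const_mul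
    (√(2 * π * σ ^ 2))⁻¹
  refine h.congr_deriv ?_
  simp only [gaussPdf, id, Pi.pow_apply, Pi.neg_apply, Nat.cast_ofNat]
  ring

lemma integrable_gaussPdf (σ : ℝ) : Integrable (gaussPdf μ σ) := by
  rw [gaussPdf_eq_gaussianPDFReal]
  exact integrable_gaussianPDFReal _ _

lemma integrable_pow_mul_gaussPdf (hσ : σ ≠ 0) (n : ℕ) :
    Integrable fun x ↦ (x - μ) ^ n * gaussPdf μ σ x := by
  have hb : 0 < 1 / (2 * σ ^ 2) := by positivity
  have h := integrable_rpow_mul_exp_neg_mul_sq hb (neg_one_lt_zero.trans_le n.cast_nonneg)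
  convert (h.comp_sub_right μ).const_mul (√(2 * π * σ ^ 2))⁻¹ using 2 with x
  simp only [gaussPdf, rpow_natCast]
  ring_nf

end Density

section Tail

variable (μ : ℝ) {σ : ℝ}

lemma gaussSurv_eq_integral_Ioi (σ t : ℝ) : gaussSurv μ σ t = ∫ z in Ioi t, gaussPdf μ σ z :=
  integral_Ici_eq_integral_Ioi

lemma integral_Ioi_sub_mul_gaussPdf (hσ : σ ≠ 0) (t : ℝ) :
    ∫ z in Ioi t, (z - μ) * gaussPdf μ σ z = σ ^ 2 * gaussPdf μ σ t := by
  have hF (z : ℝ) : HasDerivAt (fun z ↦ -σ ^ 2 * gaussPdf μ σ z) ((z - μ) * gaussPdf μ σ z) z :=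
    ((hasDerivAt_gaussPdf μ σ z).const_mul _).congr_deriv (by field_simp)
  rw [integral_Ioi_eq_neg_of_hasDerivAt hF (by simpa using integrable_pow_mul_gaussPdf μ hσ 1)
    ((integrable_gaussPdf μ σ).const_mul _) t]
  ring

lemma integral_Ioi_sub_sq_mul_gaussPdf (hσ : σ ≠ 0) (t : ℝ) :
    ∫ z in Ioi t, (z - μ) ^ 2 * gaussPdf μ σ z =
      σ ^ 2 * ((t - μ) * gaussPdf μ σ t + gaussSurv μ σ t) := by
  have hF (z : ℝ) : HasDerivAt (fun z ↦ -σ ^ 2 * ((z - μ) * gaussPdf μ σ z))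
      ((z - μ) ^ 2 * gaussPdf μ σ z - σ ^ 2 * gaussPdf μ σ z) z :=
    ((((hasDerivAt_id z).sub_const μ).mul (hasDerivAt_gaussPdf μ σ z)).const_mul _).congr_deriv
      (by simp only [id]; field_simp; ring)
  have hint₂ := integrable_pow_mul_gaussPdf μ hσ 2
  have hint₀ := (integrable_gaussPdf μ σ).const_mul (σ ^ 2)
  have h := integral_Ioi_eq_neg_of_hasDerivAt hF (hint₂.sub hint₀)
    (by simpa using (integrable_pow_mul_gaussPdf μ hσ 1).const_mul (-σ ^ 2)) t
  rw [integral_sub hint₂.integrableOn hint₀.integrableOn, integral_const_mul,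
    ← gaussSurv_eq_integral_Ioi] at h
  linear_combination h

end Tail

section Mills

variable (μ : ℝ) {σ : ℝ}

lemma sub_mul_gaussSurv_le (hσ : σ ≠ 0) (t : ℝ) :
    (t - μ) * gaussSurv μ σ t ≤ σ ^ 2 * gaussPdf μ σ t := by
  have hint₁ : Integrable fun z ↦ (z - μ) * gaussPdf μ σ z := by
    simpa using integrable_pow_mul_gaussPdf μ hσ 1
  have hint₀ := (integrable_gaussPdf μ σ).const_mul (t - μ)
  have hnonneg : 0 ≤ ∫ z in Ioi t, (z - t) * gaussPdf μ σ z :=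
    setIntegral_nonneg measurableSet_Ioi fun z hz ↦
      mul_nonneg (sub_nonneg.2 (le_of_lt hz)) (gaussPdf_pos μ hσ z).le
  have hsplit (z : ℝ) : (z - t) * gaussPdf μ σ z =
      (z - μ) * gaussPdf μ σ z - (t - μ) * gaussPdf μ σ z := by ring
  simp_rw [hsplit] at hnonneg
  rw [integral_sub hint₁.integrableOn hint₀.integrableOn, integral_const_mul,
    integral_Ioi_sub_mul_gaussPdf μ hσ, ← gaussSurv_eq_integral_Ioi] at hnonneg
  linarith

lemma sub_mul_gaussPdf_le (hσ : σ ≠ 0) (t : ℝ) :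
    (t - μ) * (σ ^ 2 * gaussPdf μ σ t) ≤ ((t - μ) ^ 2 + σ ^ 2) * gaussSurv μ σ t := by
  have hint₂ := integrable_pow_mul_gaussPdf μ hσ 2
  have hint₁ : Integrable fun z ↦ 2 * (t - μ) * ((z - μ) * gaussPdf μ σ z) := by
    simpa using (integrable_pow_mul_gaussPdf μ hσ 1).const_mul (2 * (t - μ))
  have hint₂₁ : Integrable fun z ↦
      (z - μ) ^ 2 * gaussPdf μ σ z - 2 * (t - μ) * ((z - μ) * gaussPdf μ σ z) := hint₂.sub hint₁
  have hint₀ := (integrable_gaussPdf μ σ).const_mul ((t - μ) ^ 2)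
  have hnonneg : 0 ≤ ∫ z in Ioi t, (z - t) ^ 2 * gaussPdf μ σ z :=
    setIntegral_nonneg measurableSet_Ioi fun z _ ↦
      mul_nonneg (sq_nonneg _) (gaussPdf_pos μ hσ z).le
  have hsplit (z : ℝ) : (z - t) ^ 2 * gaussPdf μ σ z = (z - μ) ^ 2 * gaussPdf μ σ z -
      2 * (t - μ) * ((z - μ) * gaussPdf μ σ z) + (t - μ) ^ 2 * gaussPdf μ σ z := by ring
  simp_rw [hsplit] at hnonneg
  rw [integral_add hint₂₁.integrableOn hint₀.integrableOn,
    integral_sub hint₂.integrableOn hint₁.integrableOn, integral_const_mul, integral_const_mul,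
    integral_Ioi_sub_sq_mul_gaussPdf μ hσ, integral_Ioi_sub_mul_gaussPdf μ hσ,
    ← gaussSurv_eq_integral_Ioi] at hnonneg
  linarith

theorem gaussSurv_isEquivalent (hσ : σ ≠ 0) :
    gaussSurv μ σ ~[atTop] fun t ↦ σ ^ 2 * gaussPdf μ σ t / (t - μ) := by
  refine isEquivalent_of_tendsto_one ?_
  have hlower : Tendsto (fun t ↦ 1 - σ ^ 2 / ((t - μ) ^ 2 + σ ^ 2)) atTop (𝓝 1) := by
    have hsq : Tendsto (fun t ↦ (t - μ) ^ 2 + σ ^ 2) atTop atTop :=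
      tendsto_atTop_add_const_right _ _ <|
        (tendsto_pow_atTop two_ne_zero).comp (tendsto_atTop_add_const_right _ _ tendsto_id)
    simpa using tendsto_const_nhds.sub (tendsto_const_nhds.div_atTop hsq)
  refine tendsto_of_tendsto_of_tendsto_of_le_of_le' hlower tendsto_const_nhds ?_ ?_ <;>
    filter_upwards [eventually_gt_atTop μ] with t ht <;>
    have hφ := gaussPdf_pos μ hσ t
  · have hD : 0 < (t - μ) ^ 2 + σ ^ 2 := by positivity
    rw [Pi.div_apply, div_div_eq_mul_div, one_sub_div hD.ne', add_sub_cancel_right,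
      div_le_div_iff₀ hD (by positivity), mul_assoc]
    nlinarith [mul_le_mul_of_nonneg_left (sub_mul_gaussPdf_le μ hσ t) (sub_pos.2 ht).le]
  · rw [Pi.div_apply, div_div_eq_mul_div, div_le_one (by positivity), mul_comm]
    exact sub_mul_gaussSurv_le μ hσ t

end Mills

section SqrtSqAddSq

variable (x : ℝ)

lemma le_sqrt_sq_add_sq (t : ℝ) : t ≤ √(t ^ 2 + x ^ 2) :=
  (le_abs_self t).trans (abs_le_sqrt (le_add_of_nonneg_right (sq_nonneg x)))

lemma tendsto_sqrt_sq_add_sq_atTop : Tendsto (fun t ↦ √(t ^ 2 + x ^ 2)) atTop atTop :=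
  tendsto_atTop_mono (le_sqrt_sq_add_sq x) tendsto_id

lemma tendsto_sqrt_sq_add_sq_sub_self : Tendsto (fun t ↦ √(t ^ 2 + x ^ 2) - t) atTop (𝓝 0) := by
  have hsum : Tendsto (fun t ↦ √(t ^ 2 + x ^ 2) + t) atTop atTop :=
    (tendsto_sqrt_sq_add_sq_atTop x).atTop_add_atTop tendsto_id
  refine ((tendsto_const_nhds (x := x ^ 2)).div_atTop hsum).congr' ?_
  filter_upwards [eventually_gt_atTop 0] with t ht
  have hpos : 0 < √(t ^ 2 + x ^ 2) + t := by positivity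
  rw [div_eq_iff hpos.ne']
  nlinarith [sq_sqrt (by positivity : 0 ≤ t ^ 2 + x ^ 2)]

lemma tendsto_sqrt_sq_add_sq_sub_div_sub (c : ℝ) :
    Tendsto (fun t ↦ (√(t ^ 2 + x ^ 2) - c) / (t - c)) atTop (𝓝 1) := by
  have hden : Tendsto (fun t ↦ t - c) atTop atTop := tendsto_atTop_add_const_right _ (-c) tendsto_id
  have h : Tendsto (fun t ↦ 1 + (√(t ^ 2 + x ^ 2) - t) / (t - c)) atTop (𝓝 1) := by
    simpa using tendsto_const_nhds.add ((tendsto_sqrt_sq_add_sq_sub_self x).div_atTop hden)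
  refine h.congr' ?_
  filter_upwards [eventually_gt_atTop c] with t ht
  field_simp [(sub_pos.2 ht).ne']
  ring

end SqrtSqAddSq

section RegularVariation

variable (μ : ℝ) {σ : ℝ}

lemma tendsto_gaussPdf_sqrt_div_gaussPdf (hσ : σ ≠ 0) (x : ℝ) :
    Tendsto (fun t ↦ gaussPdf μ σ √(t ^ 2 + x ^ 2) / gaussPdf μ σ t) atTop
      (𝓝 (exp (-x ^ 2 / (2 * σ ^ 2)))) := by
  have hexponent (t : ℝ) : ((t - μ) ^ 2 - (√(t ^ 2 + x ^ 2) - μ) ^ 2) / (2 * σ ^ 2) =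
      (-x ^ 2 + 2 * μ * (√(t ^ 2 + x ^ 2) - t)) / (2 * σ ^ 2) := by
    have hsq : √(t ^ 2 + x ^ 2) ^ 2 = t ^ 2 + x ^ 2 := sq_sqrt (by positivity)
    congr 1
    linear_combination -hsq
  simp_rw [gaussPdf_div_gaussPdf μ hσ, hexponent]
  simpa using (((tendsto_sqrt_sq_add_sq_sub_self x).const_mul (2 * μ)).const_add (-x ^ 2)
    |>.div_const (2 * σ ^ 2)).rexp

lemma tendsto_gaussPdf_div_deriv_exp_sq_ratio (hσ : σ ≠ 0) (x : ℝ) :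
    Tendsto (fun t ↦
        (gaussPdf μ σ √(t ^ 2 + x ^ 2) /
          (2 * √(t ^ 2 + x ^ 2) * exp (√(t ^ 2 + x ^ 2) ^ 2))) /
        (gaussPdf μ σ t / (2 * t * exp (t ^ 2))))
      atTop (𝓝 (exp (x ^ 2) ^ (-(1 : ℝ) / (2 * σ ^ 2) - 1))) := by
  have hlim : exp (x ^ 2) ^ (-(1 : ℝ) / (2 * σ ^ 2) - 1) =
      exp (-x ^ 2 / (2 * σ ^ 2)) * 1⁻¹ * exp (-x ^ 2) := by
    rw [← exp_mul, inv_one, mul_one, ← exp_add]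
    congr 1
    ring
  rw [hlim]
  refine (((tendsto_gaussPdf_sqrt_div_gaussPdf μ hσ x).mul
    ((tendsto_sqrt_sq_add_sq_sub_div_sub x 0).inv₀ one_ne_zero)).mul tendsto_const_nhds).congr' ?_
  filter_upwards [eventually_gt_atTop 0] with t ht
  have hs : 0 < √(t ^ 2 + x ^ 2) := by positivity
  have hφ := (gaussPdf_pos μ hσ t).ne'
  rw [sq_sqrt (by positivity), exp_add, exp_neg, sub_zero, sub_zero]
  field_simp

lemma tendsto_gaussSurv_sqrt_div_gaussSurv (hσ : σ ≠ 0) (x : ℝ) :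
    Tendsto (fun t ↦ gaussSurv μ σ √(t ^ 2 + x ^ 2) / gaussSurv μ σ t)
      atTop (𝓝 (exp (x ^ 2) ^ (-(1 : ℝ) / (2 * σ ^ 2)))) := by
  have hlim : exp (x ^ 2) ^ (-(1 : ℝ) / (2 * σ ^ 2)) = exp (-x ^ 2 / (2 * σ ^ 2)) * 1⁻¹ := by
    rw [← exp_mul, inv_one, mul_one]
    congr 1
    ring
  rw [hlim]
  have hequiv := gaussSurv_isEquivalent μ hσ
  refine ((hequiv.comp_tendsto (tendsto_sqrt_sq_add_sq_atTop x)).div hequiv).symm.tendsto_nhds ?_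
  refine ((tendsto_gaussPdf_sqrt_div_gaussPdf μ hσ x).mul
    ((tendsto_sqrt_sq_add_sq_sub_div_sub x μ).inv₀ one_ne_zero)).congr' ?_
  filter_upwards [eventually_gt_atTop μ] with t ht
  have hs : μ < √(t ^ 2 + x ^ 2) := ht.trans_le (le_sqrt_sq_add_sq x t)
  have hφ := (gaussPdf_pos μ hσ t).ne'
  simp only [Function.comp, Pi.div_apply]
  field_simp [(sub_pos.2 ht).ne', (sub_pos.2 hs).ne']

end RegularVariation

/-- with `T(x) = exp(x²)` (so `t ⋆ x = √(t² + x²)` and `T'(x) = 2x exp(x²)`),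
the function `x ↦ φ(x)/T'(x)` is `T`-regularly varying with index `−1/(2σ²) − 1` and the
Gaussian survival function `Φ̄` is `T`-regularly varying with index `−1/(2σ²)`:
`Φ̄(√(t²+x²))/Φ̄(t) → exp(x²)^{−1/(2σ²)}` as `t → ∞`, for all `x ≥ 0`. -/
theorem gaussian_T_regular_variation (μ σ : ℝ) (hσ : 0 < σ) :
    ∀ x : ℝ, 0 ≤ x →
      Tendsto (fun t =>
          (gaussPdf μ σ (Real.sqrt (t ^ 2 + x ^ 2)) /
            (2 * Real.sqrt (t ^ 2 + x ^ 2) * Real.exp (Real.sqrt (t ^ 2 + x ^ 2) ^ 2))) /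
          (gaussPdf μ σ t / (2 * t * Real.exp (t ^ 2))))
        atTop (𝓝 (Real.exp (x ^ 2) ^ (-(1 : ℝ) / (2 * σ ^ 2) - 1))) ∧
      Tendsto (fun t => gaussSurv μ σ (Real.sqrt (t ^ 2 + x ^ 2)) / gaussSurv μ σ t)
        atTop (𝓝 (Real.exp (x ^ 2) ^ (-(1 : ℝ) / (2 * σ ^ 2)))) :=
  fun x _ ↦ ⟨tendsto_gaussPdf_div_deriv_exp_sq_ratio μ hσ.ne' x,
    tendsto_gaussSurv_sqrt_div_gaussSurv μ hσ.ne' x⟩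
end

section
/- Let (X, Y) be a random vector on [1,∞) × ℝ^{d-1} with x-survival function F̄(x,y) = Pr(X ≥ x, Y ≤ y) and F̄_X > 0. Suppose the conditional law of (X/t, Y) given X ≥ t converges weakly to a probability distribution ν on [1,∞) × ℝ^{d-1} whose first marginal ν_X is not the Dirac mass at 1. Then ν = P_α × H for some α > 0 and some probability distribution H on ℝ^{d-1}, where P_α is the Pareto distribution with survival function x^{-α} on [1,∞); in particular the two components of ν are independent. -/
/-!
Write `μₜ` for the law of `(X / t, Y)` given `X ≥ t`. For `a, s ≥ 1` one has exactly
`μₜₛ((a,∞) × B) · μₜ([s,∞) × ℝ^{d-1}) = μₜ((sa,∞) × B)`. Letting `t → ∞` along `ν`-continuity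
sets gives `ν((a,∞) × B) · ν₁((s,∞)) = ν((sa,∞) × B)`, first off the countably many atoms of the
first marginal `ν₁`, then for all `a, s ≥ 1` by right-continuity. For `B` the whole space this
makes the survival function of `ν₁` monotone and multiplicative on `[1,∞)`, hence `s^{-α}`, and
nondegeneracy gives `α > 0`. For `a = 1` it says `ν((s,∞) × B) = ν₁((s,∞)) · H(B)` with `H` the
second marginal, and rectangles whose second side is an `H`-continuity set generate the product
σ-algebra.
-/

open Filter Topology MeasureTheory ProbabilityTheory

/-- The Pareto distribution on `[1,∞)` with shape `α`, given by its density
`α x^{−α−1}` on `[1,∞)`; its survival function is `x^{−α}`. -/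
noncomputable def paretoLaw (α : ℝ) : Measure ℝ :=
  MeasureTheory.volume.withDensity fun x =>
    ENNReal.ofReal (Set.indicator (Set.Ici 1) (fun x => α * x ^ (-α - 1)) x)

open Set
open scoped ENNReal

lemma measure_Ioi_eq_measure_univ {μ : Measure ℝ} {s : ℝ} (h : μ (Iic s) = 0) :
    μ (Ioi s) = μ univ :=
  measure_congr (ae_eq_univ.2 (by rwa [compl_Ioi]))

section Pareto

variable {α : ℝ}

lemma paretoLaw_eq_paretoMeasure (α : ℝ) : paretoLaw α = paretoMeasure 1 α := by
  unfold paretoLaw paretoMeasure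
  congr 1
  funext x
  rw [paretoPDF_eq]
  by_cases h : (1 : ℝ) ≤ x
  · rw [indicator_of_mem (mem_Ici.2 h), if_pos h, Real.one_rpow, mul_one]
    ring_nf
  · rw [indicator_of_notMem (by simpa using h), if_neg h]

lemma isProbabilityMeasure_paretoLaw (hα : 0 < α) : IsProbabilityMeasure (paretoLaw α) := by
  rw [paretoLaw_eq_paretoMeasure]
  exact isProbabilityMeasure_paretoMeasure one_pos hα

lemma paretoLaw_Ioi (hα : 0 < α) {s : ℝ} (hs : 1 ≤ s) :
    paretoLaw α (Ioi s) = ENNReal.ofReal (s ^ (-α)) := by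
  have hs0 : 0 < s := one_pos.trans_le hs
  have hint : IntegrableOn (fun x : ℝ => α * x ^ (-α - 1)) (Ioi s) :=
    (integrableOn_Ioi_rpow_of_lt (by linarith) hs0).const_mul α
  rw [paretoLaw, withDensity_apply _ measurableSet_Ioi,
    setLIntegral_congr_fun measurableSet_Ioi fun x (hx : s < x) =>
      congrArg ENNReal.ofReal (indicator_of_mem (mem_Ici.2 (hs.trans hx.le)) _),
    ← ofReal_integral_eq_lintegral_ofReal hint]
  · rw [integral_const_mul, integral_Ioi_rpow_of_lt (by linarith) hs0, sub_add_cancel]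
    field_simp
  · filter_upwards [ae_restrict_mem measurableSet_Ioi] with x (hx : s < x)
    have := Real.rpow_nonneg (hs0.trans hx).le (-α - 1)
    simp only [Pi.zero_apply]
    positivity

lemma paretoLaw_Iic_one (hα : 0 < α) : paretoLaw α (Iic 1) = 0 := by
  have := isProbabilityMeasure_paretoLaw hα
  rw [← compl_Ioi, prob_compl_eq_zero_iff measurableSet_Ioi, paretoLaw_Ioi hα le_rfl,
    Real.one_rpow, ENNReal.ofReal_one]

end Pareto

lemma AntitoneOn.eq_mul_of_map_add {g : ℝ → ℝ} (hg : AntitoneOn g (Ici 0))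
    (hadd : ∀ x ≥ 0, ∀ y ≥ 0, g (x + y) = g x + g y) {x : ℝ} (hx : 0 ≤ x) :
    g x = g 1 * x := by
  have hnsmul : ∀ n : ℕ, ∀ y ≥ 0, g (n * y) = n * g y := by
    intro n y hy
    induction n with
    | zero => simpa using hadd 0 le_rfl 0 le_rfl
    | succ n ih =>
      push_cast
      rw [add_mul, one_mul, hadd _ (by positivity) _ hy, ih, add_mul, one_mul]
  have hnat : ∀ k : ℕ, g k = k * g 1 := fun k => by simpa using hnsmul k 1 zero_le_one
  have hc : g 1 ≤ 0 := by
    have h0 : g 0 = 0 := by simpa using hadd 0 le_rfl 0 le_rfl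
    simpa [h0] using hg (mem_Ici.2 le_rfl) (mem_Ici.2 zero_le_one) zero_le_one
  -- Comparing `n * x` with `⌊n * x⌋₊` and `⌊n * x⌋₊ + 1` traps `n * (g x - g 1 * x)`
  -- in `[g 1, -g 1]`.
  have hbound : ∀ n : ℕ, |n * (g x - g 1 * x)| ≤ -g 1 := by
    intro n
    set k := ⌊(n : ℝ) * x⌋₊
    have hnx : 0 ≤ (n : ℝ) * x := by positivity
    have hk := Nat.floor_le hnx
    have hk1 := Nat.lt_floor_add_one ((n : ℝ) * x)
    have hup : n * g x ≤ k * g 1 := by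
      rw [← hnsmul n x hx, ← hnat]
      exact hg (mem_Ici.2 (by positivity)) (mem_Ici.2 hnx) (by simpa using hk)
    have hlow : (k + 1 : ℝ) * g 1 ≤ n * g x := by
      rw [← hnsmul n x hx, ← Nat.cast_add_one, ← hnat]
      exact hg (mem_Ici.2 hnx) (mem_Ici.2 (by positivity)) (by push_cast; exact hk1.le)
    rw [abs_le]
    constructor <;> nlinarith
  by_contra hne
  have hpos : 0 < |g x - g 1 * x| := abs_pos.2 (sub_ne_zero.2 hne)
  obtain ⟨n, hn⟩ := exists_nat_gt (-g 1 / |g x - g 1 * x|)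
  have := hbound n
  rw [abs_mul, Nat.abs_cast, div_lt_iff₀ hpos] at *
  linarith

lemma AntitoneOn.eq_rpow_of_map_mul {G : ℝ → ℝ} (hG : AntitoneOn G (Ici 1))
    (hpos : ∀ x ≥ 1, 0 < G x) (hmul : ∀ x ≥ 1, ∀ y ≥ 1, G (x * y) = G x * G y) {x : ℝ}
    (hx : 1 ≤ x) : G x = x ^ Real.log (G (Real.exp 1)) := by
  set g : ℝ → ℝ := fun y => Real.log (G (Real.exp y))
  have hexp : ∀ {y : ℝ}, 0 ≤ y → 1 ≤ Real.exp y := Real.one_le_exp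
  have hg : AntitoneOn g (Ici 0) := fun y hy z hz hyz =>
    Real.log_le_log (hpos _ (hexp hz)) (hG (hexp hy) (hexp hz) (Real.exp_le_exp.2 hyz))
  have hadd : ∀ y ≥ 0, ∀ z ≥ 0, g (y + z) = g y + g z := fun y hy z hz => by
    simp only [g, Real.exp_add, hmul _ (hexp hy) _ (hexp hz),
      Real.log_mul (hpos _ (hexp hy)).ne' (hpos _ (hexp hz)).ne']
  have hx0 : 0 < x := one_pos.trans_le hx
  have key := hg.eq_mul_of_map_add hadd (Real.log_nonneg hx)
  simp only [g, Real.exp_log hx0] at key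
  rw [Real.rpow_def_of_pos hx0, mul_comm, ← key, Real.exp_log (hpos x hx)]

lemma MeasureTheory.Measure.eq_dirac_of_measure_compl_singleton {β : Type*} [MeasurableSpace β]
    [MeasurableSingletonClass β] {μ : Measure β} [IsProbabilityMeasure μ] {x : β}
    (h : μ {x}ᶜ = 0) : μ = Measure.dirac x := by
  have hx : μ {x} = 1 := (prob_compl_eq_zero_iff (measurableSet_singleton x)).1 h
  rw [← Measure.restrict_eq_self_of_ae_mem (s := {x}) (mem_ae_iff.2 h),
    Measure.restrict_singleton, hx, one_smul]

lemma continuousWithinAt_measure_Ioi (ρ : Measure ℝ) [IsFiniteMeasure ρ] (a : ℝ) :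
    ContinuousWithinAt (fun c => ρ (Ioi c)) (Ioi a) a := by
  have hIic : ⋂ r > a, Iic r = Iic a := by
    ext x
    simpa using ⟨le_of_forall_gt_imp_ge_of_dense, fun hx r hr => hx.trans hr.le⟩
  have h := tendsto_measure_biInter_gt (μ := ρ) (s := Iic) (a := a)
    (fun _ _ => measurableSet_Iic.nullMeasurableSet) (fun _ _ _ hij => Iic_subset_Iic.2 hij)
    ⟨a + 1, by linarith, measure_ne_top _ _⟩
  rw [hIic] at h
  have hcompl : ∀ c, ρ (Ioi c) = ρ univ - ρ (Iic c) := fun c => by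
    rw [← compl_Iic, measure_compl measurableSet_Iic (measure_ne_top ρ _)]
  simp only [ContinuousWithinAt, hcompl]
  exact ENNReal.Tendsto.sub tendsto_const_nhds h (Or.inl (measure_ne_top ρ univ))

lemma exists_measure_Ioi_lt_one (ρ : Measure ℝ) [IsProbabilityMeasure ρ] :
    ∃ u ≥ 1, ρ (Ioi u) < 1 := by
  obtain ⟨u, hu, hu1⟩ := (((tendsto_measure_Iic_atTop ρ).eventually
    (lt_mem_nhds (by simp : (0 : ℝ≥0∞) < ρ univ))).and (eventually_ge_atTop 1)).exists
  refine ⟨u, hu1, ?_⟩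
  rw [← compl_Iic, prob_compl_eq_one_sub measurableSet_Iic]
  exact ENNReal.sub_lt_self ENNReal.one_ne_top one_ne_zero hu.ne'

lemma eq_paretoLaw_of_measure_Ioi {ρ : Measure ℝ} [IsProbabilityMeasure ρ] {α : ℝ} (hα : 0 < α)
    (hsupp : ρ (Iio 1) = 0) (h : ∀ s ≥ 1, ρ (Ioi s) = ENNReal.ofReal (s ^ (-α))) :
    ρ = paretoLaw α := by
  have := isProbabilityMeasure_paretoLaw hα
  refine ext_of_generate_finite _ (BorelSpace.measurable_eq.trans (borel_eq_generateFrom_Ioi ℝ))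
    isPiSystem_Ioi ?_ (by simp)
  rintro _ ⟨s, rfl⟩
  rcases lt_or_ge s 1 with hs | hs
  · rw [measure_Ioi_eq_measure_univ (measure_mono_null (Iic_subset_Iio.2 hs) hsupp),
      measure_Ioi_eq_measure_univ
        (measure_mono_null (Iic_subset_Iic.2 hs.le) (paretoLaw_Iic_one hα)), measure_univ,
      measure_univ]
  · rw [h s hs, paretoLaw_Ioi hα hs]

section ScaleInvariant

variable {ρ : Measure ℝ} [IsProbabilityMeasure ρ]

lemma measure_Ioi_one_eq_one_of_mul (hsupp : ρ (Iio 1) = 0) (hne : ρ ≠ Measure.dirac 1)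
    (hmul : ∀ a ≥ 1, ∀ s ≥ 1, ρ (Ioi a) * ρ (Ioi s) = ρ (Ioi (s * a))) : ρ (Ioi 1) = 1 := by
  have hsq := hmul 1 le_rfl 1 le_rfl
  rw [mul_one] at hsq
  by_cases h0 : ρ (Ioi 1) = 0
  · refine absurd (Measure.eq_dirac_of_measure_compl_singleton ?_) hne
    rw [← Iio_union_Ioi]
    exact measure_union_null hsupp h0
  · exact (ENNReal.mul_right_inj h0 (measure_ne_top _ _)).1 (hsq.trans (mul_one _).symm)

lemma measure_Ioi_ne_zero_of_mul (h1 : ρ (Ioi 1) = 1)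
    (hmul : ∀ a ≥ 1, ∀ s ≥ 1, ρ (Ioi a) * ρ (Ioi s) = ρ (Ioi (s * a))) {u : ℝ} (hu : 1 ≤ u) :
    ρ (Ioi u) ≠ 0 := by
  intro hu0
  have hpow : ∀ c ≥ 1, ∀ n : ℕ, ρ (Ioi (c ^ n)) = ρ (Ioi c) ^ n := by
    intro c hc n
    induction n with
    | zero => simpa using h1
    | succ n ih => rw [pow_succ, ← hmul c hc _ (one_le_pow₀ hc), ih, pow_succ']
  -- Every `c > 1` has a power beyond `u`, so the survival function vanishes right of `1`.
  have hzero : ∀ c > 1, ρ (Ioi c) = 0 := by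
    intro c hc
    obtain ⟨n, hn⟩ := pow_unbounded_of_one_lt u hc
    refine pow_eq_zero_iff (n := n) ?_ |>.1 ?_
    · rintro rfl
      simp only [pow_zero] at hn
      linarith
    · rw [← hpow c hc.le, ← nonpos_iff_eq_zero, ← hu0]
      exact measure_mono (Ioi_subset_Ioi hn.le)
  have hlim : Tendsto (fun c => ρ (Ioi c)) (𝓝[>] 1) (𝓝 0) :=
    tendsto_const_nhds.congr' (eventually_nhdsWithin_of_forall fun c hc => (hzero c hc).symm)
  exact one_ne_zero (h1.symm.trans (tendsto_nhds_unique (continuousWithinAt_measure_Ioi ρ 1) hlim))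

theorem exists_eq_paretoLaw_of_measure_Ioi_mul (hsupp : ρ (Iio 1) = 0)
    (hne : ρ ≠ Measure.dirac 1)
    (hmul : ∀ a ≥ 1, ∀ s ≥ 1, ρ (Ioi a) * ρ (Ioi s) = ρ (Ioi (s * a))) :
    ∃ α, 0 < α ∧ ρ = paretoLaw α := by
  have h1 := measure_Ioi_one_eq_one_of_mul hsupp hne hmul
  set α := -Real.log (ρ.real (Ioi (Real.exp 1)))
  have hG : ∀ s ≥ 1, ρ.real (Ioi s) = s ^ (-α) := by
    intro s hs
    rw [neg_neg]
    refine AntitoneOn.eq_rpow_of_map_mul (fun x _ y _ hxy => measureReal_mono (Ioi_subset_Ioi hxy))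
      (fun x hx => ENNReal.toReal_pos (measure_Ioi_ne_zero_of_mul h1 hmul hx) (measure_ne_top _ _))
      (fun x hx y hy => ?_) hs
    rw [measureReal_def, measureReal_def, measureReal_def, ← ENNReal.toReal_mul,
      ← hmul y hy x hx, mul_comm]
  obtain ⟨u, hu1, hu⟩ := exists_measure_Ioi_lt_one ρ
  have hα : 0 < α := by
    by_contra! hα
    have : 1 ≤ ρ.real (Ioi u) := hG u hu1 ▸ Real.one_le_rpow hu1 (by linarith)
    rw [measureReal_def, ← ENNReal.ofReal_le_iff_le_toReal (measure_ne_top _ _),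
      ENNReal.ofReal_one] at this
    exact this.not_gt hu
  refine ⟨α, hα, eq_paretoLaw_of_measure_Ioi hα hsupp fun s hs => ?_⟩
  rw [← hG s hs, measureReal_def, ENNReal.ofReal_toReal (measure_ne_top _ _)]

end ScaleInvariant

lemma eq_of_continuousWithinAt_Ioi_of_countable {γ : Type*} [TopologicalSpace γ] [T2Space γ]
    {f g : ℝ → γ} {C : Set ℝ} (hC : C.Countable) {x : ℝ} (hf : ContinuousWithinAt f (Ioi x) x)
    (hg : ContinuousWithinAt g (Ioi x) x) (hfg : ∀ y > x, y ∉ C → f y = g y) : f x = g x := by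
  have : (𝓝[Ioi x \ C] x).NeBot := by
    rw [← mem_closure_iff_nhdsWithin_neBot, sdiff_eq]
    refine closure_minimal ((hC.dense_compl ℝ).open_subset_closure_inter isOpen_Ioi)
      isClosed_closure ?_
    rw [closure_Ioi]
    exact mem_Ici.2 le_rfl
  exact tendsto_nhds_unique_of_eventuallyEq (hf.mono sdiff_subset) (hg.mono sdiff_subset)
    (eventually_nhdsWithin_of_forall fun y hy => hfg y hy.1 hy.2)

lemma continuousWithinAt_measure_Ioi_mul {ρ : Measure ℝ} [IsFiniteMeasure ρ] {s : ℝ} (hs : 0 < s)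
    (a : ℝ) : ContinuousWithinAt (fun c => ρ (Ioi (s * c))) (Ioi a) a :=
  (continuousWithinAt_measure_Ioi ρ (s * a)).comp (continuous_const_mul s).continuousWithinAt
    fun _ hc => mul_lt_mul_of_pos_left hc hs

/-- Both sides are right-continuous in `a` and in `s`, and the atoms of `σ` are countable. -/
lemma measure_Ioi_mul_of_forall_notMem_atoms {ρ σ : Measure ℝ} [IsFiniteMeasure ρ]
    [IsFiniteMeasure σ]
    (h : ∀ a ≥ 1, ∀ s ≥ 1, σ {a} = 0 → σ {s} = 0 → σ {s * a} = 0 →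
      ρ (Ioi a) * σ (Ioi s) = ρ (Ioi (s * a)))
    {a : ℝ} (ha : 1 ≤ a) {s : ℝ} (hs : 1 ≤ s) : ρ (Ioi a) * σ (Ioi s) = ρ (Ioi (s * a)) := by
  set D := {c : ℝ | 0 < σ {c}}
  have hD : D.Countable := Measure.countable_meas_pos_of_disjoint_iUnion measurableSet_singleton
    fun _ _ hxy => disjoint_singleton.2 hxy
  have hnotD : ∀ c ∉ D, σ {c} = 0 := fun c hc => nonpos_iff_eq_zero.1 (not_lt.1 hc)
  have hgood : ∀ s ≥ 1, s ∉ D → ∀ a ≥ 1, ρ (Ioi a) * σ (Ioi s) = ρ (Ioi (s * a)) := by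
    intro s hs hsD a ha
    have hs0 : 0 < s := one_pos.trans_le hs
    refine eq_of_continuousWithinAt_Ioi_of_countable
      (hD.union (hD.preimage (mul_right_injective₀ hs0.ne')))
      (ENNReal.Tendsto.mul_const (continuousWithinAt_measure_Ioi ρ a)
        (Or.inr (measure_ne_top σ _)))
      (continuousWithinAt_measure_Ioi_mul hs0 a) fun b hb hbD => ?_
    simp only [mem_union, mem_preimage, not_or] at hbD
    exact h b (ha.trans hb.le) s hs (hnotD b hbD.1) (hnotD s hsD) (hnotD _ hbD.2)
  have ha0 : 0 < a := one_pos.trans_le ha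
  simp_rw [mul_comm _ a]
  exact eq_of_continuousWithinAt_Ioi_of_countable hD
    (ENNReal.Tendsto.const_mul (continuousWithinAt_measure_Ioi σ s) (Or.inr (measure_ne_top ρ _)))
    (continuousWithinAt_measure_Ioi_mul ha0 s) fun b hb hbD => by
      rw [mul_comm a]; exact hgood b (hs.trans hb.le) hbD a ha

lemma MeasureTheory.Measure.eq_smul_of_measure_Ioi_mul {ρ σ : Measure ℝ} [IsFiniteMeasure ρ]
    [IsProbabilityMeasure σ] (hρ : ρ (Iic 1) = 0) (hσ : σ (Iic 1) = 0)
    (h : ∀ s ≥ 1, ρ (Ioi 1) * σ (Ioi s) = ρ (Ioi s)) : ρ = ρ univ • σ := by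
  have hρ' : ∀ s ≤ 1, ρ (Ioi s) = ρ univ := fun s hs =>
    measure_Ioi_eq_measure_univ (measure_mono_null (Iic_subset_Iic.2 hs) hρ)
  refine ext_of_generate_finite _ (BorelSpace.measurable_eq.trans (borel_eq_generateFrom_Ioi ℝ))
    isPiSystem_Ioi ?_ (by simp)
  rintro _ ⟨s, rfl⟩
  rw [Measure.smul_apply, smul_eq_mul]
  rcases le_total s 1 with hs | hs
  · rw [hρ' s hs, measure_Ioi_eq_measure_univ (measure_mono_null (Iic_subset_Iic.2 hs) hσ),
      measure_univ (μ := σ), mul_one]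
  · rw [← h s hs, hρ' 1 le_rfl]

open Metric MeasurableSpace in
theorem MeasurableSpace.generateFrom_setOf_null_frontier {β : Type*} [PseudoMetricSpace β]
    [SecondCountableTopology β] [MeasurableSpace β] [BorelSpace β] (μ : Measure β) [SFinite μ] :
    generateFrom {s : Set β | MeasurableSet s ∧ μ (frontier s) = 0} = ‹MeasurableSpace β› := by
  refine le_antisymm (generateFrom_le fun s hs => hs.1) ?_
  refine BorelSpace.measurable_eq.trans_le (generateFrom_le fun u hu => ?_)
  have hball : ∀ x ∈ u, ∃ r > 0, ball x r ⊆ u ∧ μ (frontier (ball x r)) = 0 := by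
    intro x hx
    obtain ⟨ε, hε, hεu⟩ := isOpen_iff.1 hu x hx
    obtain ⟨r, hr, hμr⟩ := exists_null_frontier_thickening μ {x} hε
    rw [thickening_singleton] at hμr
    exact ⟨r, hr.1, (ball_subset_ball hr.2.le).trans hεu, hμr⟩
  choose! r hr hru hrμ using hball
  obtain ⟨T, hTu, hTc, hTU⟩ :=
    TopologicalSpace.isOpen_biUnion_countable u (fun x => ball x (r x)) fun _ _ => isOpen_ball
  have hu_eq : u = ⋃ x ∈ T, ball x (r x) := by
    rw [hTU]
    exact Subset.antisymm (fun x hx => mem_biUnion hx (mem_ball_self (hr x hx)))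
      (iUnion₂_subset hru)
  rw [hu_eq]
  exact MeasurableSet.biUnion hTc fun x hx =>
    measurableSet_generateFrom ⟨measurableSet_ball, hrμ x (hTu hx)⟩

section Product

variable {α β : Type*} [MeasurableSpace α] [PseudoMetricSpace β] [SecondCountableTopology β]
  [MeasurableSpace β] [BorelSpace β]

lemma MeasureTheory.Measure.eq_prod_of_measure_prod_eq {ν : Measure (α × β)} [IsFiniteMeasure ν]
    {μ₁ : Measure α} {μ₂ : Measure β} [SFinite μ₂]
    (h : ∀ A, MeasurableSet A → ∀ B, MeasurableSet B → μ₂ (frontier B) = 0 →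
      ν (A ×ˢ B) = μ₁ A * μ₂ B) :
    ν = μ₁.prod μ₂ := by
  set D := {B : Set β | MeasurableSet B ∧ μ₂ (frontier B) = 0}
  have hDpi : IsPiSystem D := fun s hs t ht _ => ⟨hs.1.inter ht.1, null_frontier_inter hs.2 ht.2⟩
  have hD : IsCountablySpanning D := ⟨fun _ => univ, fun _ => ⟨MeasurableSet.univ, by simp⟩,
    iUnion_const _⟩
  refine ext_of_generate_finite _ (generateFrom_eq_prod MeasurableSpace.generateFrom_measurableSet
    (MeasurableSpace.generateFrom_setOf_null_frontier μ₂) isCountablySpanning_measurableSet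
    hD).symm (MeasurableSpace.isPiSystem_measurableSet.prod hDpi) ?_ ?_
  · rintro _ ⟨A, hA, B, hB, rfl⟩
    rw [Measure.prod_prod]
    exact h A hA B hB.1 hB.2
  · rw [← univ_prod_univ, Measure.prod_prod]
    exact h univ MeasurableSet.univ univ MeasurableSet.univ (by simp)

end Product

lemma MeasureTheory.Measure.fst_restrict_univ_prod_apply {α β : Type*} [MeasurableSpace α]
    [MeasurableSpace β]
    (ν : Measure (α × β)) {A : Set α} (hA : MeasurableSet A) (B : Set β) :
    (ν.restrict (univ ×ˢ B)).fst A = ν (A ×ˢ B) := by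
  rw [Measure.fst_apply hA, Measure.restrict_apply (measurable_fst hA), ← prod_univ,
    prod_inter_prod, inter_univ, univ_inter]

lemma measure_frontier_prod_eq_zero {α β : Type*} [TopologicalSpace α] [MeasurableSpace α]
    [OpensMeasurableSpace α] [TopologicalSpace β] [MeasurableSpace β] [OpensMeasurableSpace β]
    {ν : Measure (α × β)} {A : Set α} {B : Set β} (hA : ν.fst (frontier A) = 0)
    (hB : ν.snd (frontier B) = 0) : ν (frontier (A ×ˢ B)) = 0 := by
  rw [Measure.fst_apply isClosed_frontier.measurableSet] at hA
  rw [Measure.snd_apply isClosed_frontier.measurableSet] at hB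
  refine measure_mono_null ?_ (measure_union_null hB hA)
  rw [frontier_prod_eq]
  exact union_subset_union (prod_subset_preimage_snd _ _) (prod_subset_preimage_fst _ _)

noncomputable def tailLaw {Ω β : Type*} [MeasurableSpace Ω] [MeasurableSpace β]
    (P : Measure Ω) (X : Ω → ℝ) (Y : Ω → β) (t : ℝ) : Measure (ℝ × β) :=
  (P[|{ω | t ≤ X ω}]).map fun ω => (X ω / t, Y ω)

section TailLaw

variable {Ω β : Type*} [MeasurableSpace Ω] [MeasurableSpace β] {P : Measure Ω} {X : Ω → ℝ}
  {Y : Ω → β}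

lemma tailLaw_prod (hX : Measurable X) (hY : Measurable Y) {t : ℝ} (ht : 0 < t) {S : Set ℝ}
    (hS : MeasurableSet S) (hS1 : S ⊆ Ici 1) {B : Set β} (hB : MeasurableSet B) :
    tailLaw P X Y t (S ×ˢ B) = (P {ω | t ≤ X ω})⁻¹ * P {ω | X ω / t ∈ S ∧ Y ω ∈ B} := by
  rw [tailLaw, Measure.map_apply (by fun_prop) (hS.prod hB),
    cond_apply (measurableSet_le measurable_const hX)]
  congr 2
  refine inter_eq_right.2 fun ω hω => ?_
  exact (one_le_div ht).1 (hS1 hω.1)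

/-- Conditioning on `X ≥ t * s` is conditioning on `X ≥ t` and then on `X / t ≥ s`. -/
lemma tailLaw_mul (hX : Measurable X) (hY : Measurable Y) [IsFiniteMeasure P]
    (hP : ∀ t, P {ω | t ≤ X ω} ≠ 0) {t : ℝ} (ht : 0 < t) {a s : ℝ} (ha : 1 ≤ a) (hs : 1 ≤ s)
    {B : Set β} (hB : MeasurableSet B) :
    tailLaw P X Y (t * s) (Ioi a ×ˢ B) * tailLaw P X Y t (Ici s ×ˢ univ) =
      tailLaw P X Y t (Ioi (s * a) ×ˢ B) := by
  have hs0 : 0 < s := one_pos.trans_le hs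
  have hIoi : ∀ c : ℝ, 1 ≤ c → Ioi c ⊆ Ici 1 := fun c hc => Ioi_subset_Ici hc
  rw [tailLaw_prod hX hY (mul_pos ht hs0) measurableSet_Ioi (hIoi a ha) hB,
    tailLaw_prod hX hY ht measurableSet_Ici (Ici_subset_Ici.2 hs) MeasurableSet.univ,
    tailLaw_prod hX hY ht measurableSet_Ioi (hIoi _ (one_le_mul_of_one_le_of_one_le hs ha)) hB]
  have hnum : {ω | X ω / (t * s) ∈ Ioi a ∧ Y ω ∈ B} = {ω | X ω / t ∈ Ioi (s * a) ∧ Y ω ∈ B} := by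
    ext ω
    simp only [mem_ofPred_eq, mem_Ioi, div_mul_eq_div_div, lt_div_iff₀ hs0, mul_comm a]
  have hden : {ω | X ω / t ∈ Ici s ∧ Y ω ∈ univ} = {ω | t * s ≤ X ω} := by
    ext ω
    simp only [mem_ofPred_eq, mem_Ici, mem_univ, and_true, le_div_iff₀ ht, mul_comm s]
  rw [hnum, hden, mul_comm, ← mul_assoc, mul_assoc (P {ω | t ≤ X ω})⁻¹,
    ENNReal.mul_inv_cancel (hP _) (measure_ne_top _ _), mul_one]

variable [PseudoMetricSpace β] [SecondCountableTopology β] [BorelSpace β]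

lemma tendsto_tailLaw_apply (hX : Measurable X) (hY : Measurable Y) [IsFiniteMeasure P]
    (hP : ∀ t, P {ω | t ≤ X ω} ≠ 0) {ν : Measure (ℝ × β)} [IsProbabilityMeasure ν]
    (hconv : ∀ g : BoundedContinuousFunction (ℝ × β) ℝ,
      Tendsto (fun t => ∫ ω, g (X ω / t, Y ω) ∂(P[|{ω | t ≤ X ω}])) atTop (𝓝 (∫ p, g p ∂ν)))
    {E : Set (ℝ × β)} (hE : ν (frontier E) = 0) :
    Tendsto (fun t => tailLaw P X Y t E) atTop (𝓝 (ν E)) := by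
  have hmap : ∀ t : ℝ, Measurable fun ω => (X ω / t, Y ω) := fun t => by fun_prop
  have : ∀ t, IsProbabilityMeasure (tailLaw P X Y t) := fun t =>
    have := cond_isProbabilityMeasure (μ := P) (hP t)
    Measure.isProbabilityMeasure_map (hmap t).aemeasurable
  let μs : ℝ → ProbabilityMeasure (ℝ × β) := fun t => ⟨tailLaw P X Y t, this t⟩
  let μ : ProbabilityMeasure (ℝ × β) := ⟨ν, inferInstance⟩
  have hμs : Tendsto μs atTop (𝓝 μ) := by
    rw [ProbabilityMeasure.tendsto_iff_forall_integral_tendsto]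
    intro g
    refine (hconv g).congr fun t => ?_
    exact (integral_map (hmap t).aemeasurable g.continuous.aestronglyMeasurable).symm
  exact ProbabilityMeasure.tendsto_measure_of_null_frontier_of_tendsto' hμs hE

theorem fst_restrict_Ioi_mul_of_tendsto (hX : Measurable X) (hY : Measurable Y)
    [IsFiniteMeasure P] (hP : ∀ t, P {ω | t ≤ X ω} ≠ 0) {ν : Measure (ℝ × β)}
    [IsProbabilityMeasure ν]
    (hconv : ∀ g : BoundedContinuousFunction (ℝ × β) ℝ,
      Tendsto (fun t => ∫ ω, g (X ω / t, Y ω) ∂(P[|{ω | t ≤ X ω}])) atTop (𝓝 (∫ p, g p ∂ν)))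
    {B : Set β} (hB : MeasurableSet B) (hBf : ν.snd (frontier B) = 0) {a : ℝ} (ha : 1 ≤ a)
    {s : ℝ} (hs : 1 ≤ s) (haD : ν.fst {a} = 0) (hsD : ν.fst {s} = 0) (hsaD : ν.fst {s * a} = 0) :
    (ν.restrict (univ ×ˢ B)).fst (Ioi a) * ν.fst (Ioi s) =
      (ν.restrict (univ ×ˢ B)).fst (Ioi (s * a)) := by
  have hs0 : 0 < s := one_pos.trans_le hs
  have hlim := fun {E} hE => tendsto_tailLaw_apply (E := E) hX hY hP hconv hE
  have T1 := (hlim (E := Ioi a ×ˢ B)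
    (measure_frontier_prod_eq_zero (by rwa [frontier_Ioi]) hBf)).comp
    (tendsto_id.atTop_mul_const hs0)
  have T2 := hlim (E := Ici s ×ˢ univ)
    (measure_frontier_prod_eq_zero (by rwa [frontier_Ici]) (by simp))
  have T3 := hlim (E := Ioi (s * a) ×ˢ B)
    (measure_frontier_prod_eq_zero (by rwa [frontier_Ioi]) hBf)
  have key := tendsto_nhds_unique ((ENNReal.Tendsto.mul T1 (Or.inr (measure_ne_top _ _)) T2
    (Or.inr (measure_ne_top _ _))).congr' ((eventually_gt_atTop 0).mono fun t ht =>
      tailLaw_mul hX hY hP ht ha hs hB)) T3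
  rwa [Measure.fst_restrict_univ_prod_apply ν measurableSet_Ioi B,
    Measure.fst_restrict_univ_prod_apply ν measurableSet_Ioi B,
    measure_congr (Ioi_ae_eq_Ici' hsD), Measure.fst_apply measurableSet_Ici, ← prod_univ]

end TailLaw

theorem limit_is_pareto_product_general {m : ℕ} {Ω : Type*} [MeasurableSpace Ω]
    (P : Measure Ω) [IsProbabilityMeasure P]
    (X : Ω → ℝ) (Y : Ω → (Fin m → ℝ)) (hX : Measurable X) (hY : Measurable Y)
    (hXpos : ∀ x : ℝ, 0 < P {ω | x ≤ X ω})
    (ν : Measure (ℝ × (Fin m → ℝ))) [IsProbabilityMeasure ν]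
    (hν_supp : ν ((Set.Ici (1:ℝ)) ×ˢ (Set.univ : Set (Fin m → ℝ)))ᶜ = 0)
    (hν_nondeg : ν.map Prod.fst ≠ Measure.dirac 1)
    (hconv : ∀ g : BoundedContinuousFunction (ℝ × (Fin m → ℝ)) ℝ,
      Tendsto (fun t => ∫ ω, g (X ω / t, Y ω) ∂(P[|{ω | t ≤ X ω}])) atTop
        (𝓝 (∫ p, g p ∂ν))) :
    ∃ α : ℝ, 0 < α ∧ ∃ H : Measure (Fin m → ℝ), IsProbabilityMeasure H ∧
      ν = (paretoLaw α).prod H := by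
  have hmul : ∀ B, MeasurableSet B → ν.snd (frontier B) = 0 → ∀ a ≥ 1, ∀ s ≥ 1,
      (ν.restrict (univ ×ˢ B)).fst (Ioi a) * ν.fst (Ioi s) =
        (ν.restrict (univ ×ˢ B)).fst (Ioi (s * a)) := fun B hB hBf a ha s hs =>
    measure_Ioi_mul_of_forall_notMem_atoms (fun a ha s hs =>
      fst_restrict_Ioi_mul_of_tendsto hX hY (fun t => (hXpos t).ne') hconv hB hBf ha hs) ha hs
  have hsupp : ν.fst (Iio 1) = 0 := by
    rw [Measure.fst_apply measurableSet_Iio]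
    exact measure_mono_null (fun p (hp : p.1 < 1) hmem => not_le.2 hp (mem_prod.1 hmem).1) hν_supp
  obtain ⟨α, hα, hfst⟩ := exists_eq_paretoLaw_of_measure_Ioi_mul hsupp hν_nondeg
    fun a ha s hs => by simpa using hmul univ MeasurableSet.univ (by simp) a ha s hs
  have hfst1 : ν.fst (Iic 1) = 0 := hfst ▸ paretoLaw_Iic_one hα
  refine ⟨α, hα, ν.snd, inferInstance, hfst ▸ Measure.eq_prod_of_measure_prod_eq
    fun A hA B hB hBf => ?_⟩
  have hslab := Measure.eq_smul_of_measure_Ioi_mul (ρ := (ν.restrict (univ ×ˢ B)).fst)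
    ((Measure.fst_mono Measure.restrict_le_self).absolutelyContinuous hfst1) hfst1
    fun s hs => by simpa using hmul B hB hBf 1 le_rfl s hs
  rw [← Measure.fst_restrict_univ_prod_apply ν hA, hslab, Measure.smul_apply, smul_eq_mul,
    Measure.fst_univ, Measure.restrict_apply_univ, Measure.snd_apply hB, mul_comm, univ_prod]

/-- if the conditional law of `(X/t, Y)` given `X ≥ t` converges weakly to a
probability distribution `ν` on `[1,∞) × ℝ^{d-1}` whose first marginal is not the Dirac
mass at `1`, then `ν = P_α × H` for some `α > 0` and some probability distribution `H`;
in particular the two components of `ν` are independent. -/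
theorem limit_is_pareto_product {m : ℕ} {Ω : Type*} [MeasurableSpace Ω]
    (P : Measure Ω) [IsProbabilityMeasure P]
    (X : Ω → ℝ) (Y : Ω → (Fin m → ℝ)) (hX : Measurable X) (hY : Measurable Y)
    (hX1 : ∀ᵐ ω ∂P, 1 ≤ X ω)
    (hXpos : ∀ x : ℝ, 0 < P {ω | x ≤ X ω})
    (ν : Measure (ℝ × (Fin m → ℝ))) [IsProbabilityMeasure ν]
    (hν_supp : ν ((Set.Ici (1:ℝ)) ×ˢ (Set.univ : Set (Fin m → ℝ)))ᶜ = 0)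
    (hν_nondeg : ν.map Prod.fst ≠ Measure.dirac 1)
    (hconv : ∀ g : BoundedContinuousFunction (ℝ × (Fin m → ℝ)) ℝ,
      Tendsto (fun t => ∫ ω, g (X ω / t, Y ω) ∂(P[|{ω | t ≤ X ω}])) atTop
        (𝓝 (∫ p, g p ∂ν))) :
    ∃ α : ℝ, 0 < α ∧ ∃ H : Measure (Fin m → ℝ), IsProbabilityMeasure H ∧
      ν = (paretoLaw α).prod H :=
  limit_is_pareto_product_general P X Y hX hY hXpos ν hν_supp hν_nondeg hconv
end

section
/- Let X follow a d-dimensional Student t distribution with mean 0, positive-definite dispersion matrix Σ, and ν degrees of freedom, i.e. density f_X(x) = k (1 + x^T Σ^{-1} x/ν)^{−(ν+d)/2}. Then f_X(tx)/f_X(t·1) → v(x)/v(1) with v(x) = (x^T Σ^{-1} x)^{−(ν+d)/2}, the function v is integrable on C = {x : ‖x‖_∞ ≥ 1}, and the conditional density of X/t given ‖X‖_∞ ≥ t converges pointwise to f_Y(y) = v(y)/∫_C v; in particular X is multivariate regularly varying of index −ν with homogeneous limiting density f_Y of order −ν−d. -/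
/-!
With `q(x) = xᵀ Σ⁻¹ x`, homogeneity of `q` gives
`t ^ (ν + d) * f_X (t x) = k (t⁻² + q(x)/ν) ^ (-(ν + d)/2)`, which increases to
`k ν ^ ((ν + d)/2) v(x)` as `t → ∞` and is therefore dominated by its limit. Compactness of the
unit sphere gives `q(x) ≥ c ‖x‖²`, so on `C` the profile `v` is at most a multiple of
`(1 + ‖x‖²) ^ (-(ν + d)/2)`, which is integrable since `ν + d > d`. Dominated convergence then
handles the integrals over subsets of `C`, and each ratio in the statement is a ratio of two such
rescaled quantities, in which the factor `t ^ (ν + d)` and the constant cancel.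
-/

open Filter Topology MeasureTheory

namespace Matrix

variable {n : Type*} [Fintype n]

theorem smul_dotProduct_mulVec_smul (A : Matrix n n ℝ) (t : ℝ) (x : n → ℝ) :
    (t • x) ⬝ᵥ A *ᵥ (t • x) = t ^ 2 * (x ⬝ᵥ A *ᵥ x) := by
  simp only [mulVec_smul, dotProduct_smul, smul_dotProduct, smul_eq_mul]
  ring

theorem continuous_dotProduct_mulVec_self (A : Matrix n n ℝ) :
    Continuous fun x : n → ℝ => x ⬝ᵥ A *ᵥ x :=
  continuous_id.dotProduct (continuous_const.matrix_mulVec continuous_id)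

theorem PosDef.exists_pos_mul_sq_norm_le {A : Matrix n n ℝ} (hA : A.PosDef) :
    ∃ c > 0, ∀ x : n → ℝ, c * ‖x‖ ^ 2 ≤ x ⬝ᵥ A *ᵥ x := by
  rcases isEmpty_or_nonempty n with hn | hn
  · exact ⟨1, one_pos, fun x => by simp [Subsingleton.elim x 0]⟩
  obtain ⟨u, hu, hmin⟩ := (isCompact_sphere (0 : n → ℝ) 1).exists_isMinOn
    (NormedSpace.sphere_nonempty.mpr zero_le_one) (continuous_dotProduct_mulVec_self A).continuousOn
  have hu0 : u ≠ 0 := ne_zero_of_mem_unit_sphere ⟨u, hu⟩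
  refine ⟨u ⬝ᵥ A *ᵥ u, hA.dotProduct_mulVec_pos hu0, fun x => ?_⟩
  rcases eq_or_ne x 0 with rfl | hx
  · simp
  have hnx : ‖x‖ ≠ 0 := norm_ne_zero_iff.mpr hx
  have hunit : ‖x‖⁻¹ • x ∈ Metric.sphere (0 : n → ℝ) 1 := by
    rw [mem_sphere_zero_iff_norm, norm_smul, norm_inv, norm_norm, inv_mul_cancel₀ hnx]
  calc (u ⬝ᵥ A *ᵥ u) * ‖x‖ ^ 2 ≤ ‖x‖ ^ 2 * ((‖x‖⁻¹ • x) ⬝ᵥ A *ᵥ (‖x‖⁻¹ • x)) := by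
        rw [mul_comm]; exact mul_le_mul_of_nonneg_left (hmin hunit) (by positivity)
    _ = x ⬝ᵥ A *ᵥ x := by
        rw [smul_dotProduct_mulVec_smul, ← mul_assoc, ← mul_pow, mul_inv_cancel₀ hnx, one_pow,
          one_mul]

end Matrix

theorem Filter.Tendsto.div_of_mul_left {α : Type*} {l : Filter α} {s f g : α → ℝ} {a b c : ℝ}
    (hf : Tendsto (fun t => s t * f t) l (𝓝 (c * a)))
    (hg : Tendsto (fun t => s t * g t) l (𝓝 (c * b)))
    (hs : ∀ᶠ t in l, s t ≠ 0) (hc : c ≠ 0) (hb : b ≠ 0) :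
    Tendsto (fun t => f t / g t) l (𝓝 (a / b)) := by
  have h := hf.div hg (mul_ne_zero hc hb)
  rw [mul_div_mul_left _ _ hc] at h
  refine h.congr' ?_
  filter_upwards [hs] with t ht
  exact mul_div_mul_left _ _ ht

namespace Real

theorem rpow_mul_one_add_sq_mul_rpow {t : ℝ} (ht : 0 < t) {a : ℝ} (ha : 0 ≤ a) (r : ℝ) :
    t ^ r * (1 + t ^ 2 * a) ^ (-r / 2) = ((t ^ 2)⁻¹ + a) ^ (-r / 2) := by
  have hsplit : 1 + t ^ 2 * a = t ^ 2 * ((t ^ 2)⁻¹ + a) := by field_simp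
  have hcancel : t ^ r * (t ^ 2) ^ (-r / 2) = 1 := by
    rw [← rpow_natCast, ← rpow_mul ht.le, ← rpow_add ht, Nat.cast_ofNat,
      show r + 2 * (-r / 2) = 0 by ring, rpow_zero]
  rw [hsplit, mul_rpow (by positivity) (by positivity), ← mul_assoc, hcancel, one_mul]

theorem tendsto_rpow_mul_one_add_sq_mul_rpow {a : ℝ} (ha : 0 < a) (r : ℝ) :
    Tendsto (fun t : ℝ => t ^ r * (1 + t ^ 2 * a) ^ (-r / 2)) atTop (𝓝 (a ^ (-r / 2))) := by
  have hbase : Tendsto (fun t : ℝ => (t ^ 2)⁻¹ + a) atTop (𝓝 a) := by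
    simpa using (tendsto_pow_atTop two_ne_zero).inv_tendsto_atTop.add_const a
  refine (hbase.rpow_const (Or.inl ha.ne')).congr' ?_
  filter_upwards [eventually_gt_atTop 0] with t ht
  exact (rpow_mul_one_add_sq_mul_rpow ht ha.le r).symm

theorem rpow_mul_one_add_sq_mul_rpow_le {t : ℝ} (ht : 0 < t) {a : ℝ} (ha : 0 < a) {r : ℝ}
    (hr : 0 ≤ r) : t ^ r * (1 + t ^ 2 * a) ^ (-r / 2) ≤ a ^ (-r / 2) := by
  rw [rpow_mul_one_add_sq_mul_rpow ht ha.le]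
  exact rpow_le_rpow_of_nonpos ha (le_add_of_nonneg_left (by positivity)) (by linarith)

end Real

section Integrability

open Module

variable {E : Type*} [NormedAddCommGroup E] [NormedSpace ℝ E] [FiniteDimensional ℝ E]
  [MeasurableSpace E] [BorelSpace E] {μ : Measure E} [μ.IsAddHaarMeasure]

theorem integrableOn_rpow_neg_of_mul_sq_norm_le {f : E → ℝ} (hf : Measurable f) {c : ℝ}
    (hc : 0 < c) (hfc : ∀ x, c * ‖x‖ ^ 2 ≤ f x) {r : ℝ} (hr : (finrank ℝ E : ℝ) < r) :
    IntegrableOn (fun x => f x ^ (-r / 2)) {x | 1 ≤ ‖x‖} μ := by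
  have hr0 : 0 ≤ r := (Nat.cast_nonneg _).trans hr.le
  refine (((integrable_rpow_neg_one_add_norm_sq hr).const_mul ((c / 2) ^ (-r / 2))).integrableOn
    (s := {x | 1 ≤ ‖x‖})).mono' (hf.pow_const _).aestronglyMeasurable ?_
  refine (ae_restrict_iff' (isClosed_le continuous_const continuous_norm).measurableSet).mpr
    (Eventually.of_forall fun x (hx : 1 ≤ ‖x‖) => ?_)
  have hlow : c / 2 * (1 + ‖x‖ ^ 2) ≤ f x := by nlinarith [hfc x, one_le_pow₀ (n := 2) hx]
  have hpos : 0 < c / 2 * (1 + ‖x‖ ^ 2) := by positivity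
  rw [Real.norm_of_nonneg (Real.rpow_nonneg (hpos.le.trans hlow) _),
    ← Real.mul_rpow (by positivity) (by positivity)]
  exact Real.rpow_le_rpow_of_nonpos hpos hlow (by linarith)

end Integrability

section Student

open Matrix

variable {n : Type*} [Fintype n] (A : Matrix n n ℝ) (ν k r : ℝ)

noncomputable def studentDensity (x : n → ℝ) : ℝ :=
  k * (1 + x ⬝ᵥ A *ᵥ x / ν) ^ (-r / 2)

noncomputable def studentProfile (x : n → ℝ) : ℝ :=
  (x ⬝ᵥ A *ᵥ x) ^ (-r / 2)

variable {A ν k r}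

theorem studentDensity_smul (t : ℝ) (x : n → ℝ) :
    studentDensity A ν k r (t • x) = k * (1 + t ^ 2 * (x ⬝ᵥ A *ᵥ x / ν)) ^ (-r / 2) := by
  rw [studentDensity, smul_dotProduct_mulVec_smul, mul_div_assoc]

theorem studentDensity_nonneg (hA : A.PosSemidef) (hν : 0 ≤ ν) (hk : 0 ≤ k) (x : n → ℝ) :
    0 ≤ studentDensity A ν k r x :=
  mul_nonneg hk <| Real.rpow_nonneg
    (add_nonneg zero_le_one (div_nonneg (hA.dotProduct_mulVec_nonneg x) hν)) _

theorem measurable_studentDensity : Measurable (studentDensity A ν k r) :=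
  (((continuous_dotProduct_mulVec_self A).measurable.div_const ν).const_add 1).pow_const
    _ |>.const_mul k

theorem studentProfile_pos (hA : A.PosDef) {x : n → ℝ} (hx : x ≠ 0) :
    0 < studentProfile A r x :=
  Real.rpow_pos_of_pos (hA.dotProduct_mulVec_pos hx) _

theorem studentProfile_smul (hA : A.PosSemidef) {t : ℝ} (ht : 0 ≤ t) (x : n → ℝ) :
    studentProfile A r (t • x) = t ^ (-r) * studentProfile A r x := by
  have hq : 0 ≤ x ⬝ᵥ A *ᵥ x := hA.dotProduct_mulVec_nonneg x
  rw [studentProfile, studentProfile, smul_dotProduct_mulVec_smul,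
    Real.mul_rpow (by positivity) hq, ← Real.rpow_natCast,
    ← Real.rpow_mul ht, Nat.cast_ofNat, mul_div_cancel₀ _ two_ne_zero]

theorem tendsto_rpow_mul_studentDensity_smul (hA : A.PosDef) (hν : 0 < ν) {x : n → ℝ}
    (hx : x ≠ 0) :
    Tendsto (fun t : ℝ => t ^ r * studentDensity A ν k r (t • x)) atTop
      (𝓝 (k / ν ^ (-r / 2) * studentProfile A r x)) := by
  have hq : 0 < x ⬝ᵥ A *ᵥ x := hA.dotProduct_mulVec_pos hx
  have h := (Real.tendsto_rpow_mul_one_add_sq_mul_rpow (div_pos hq hν) r).const_mul k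
  rw [Real.div_rpow hq.le hν.le] at h
  convert h using 1
  · ext t
    rw [studentDensity_smul, mul_left_comm]
  · rw [studentProfile, div_mul_eq_mul_div, mul_div_assoc]

theorem rpow_mul_studentDensity_smul_le (hA : A.PosDef) (hν : 0 < ν) (hk : 0 ≤ k) (hr : 0 ≤ r)
    {t : ℝ} (ht : 0 < t) {x : n → ℝ} (hx : x ≠ 0) :
    t ^ r * studentDensity A ν k r (t • x) ≤ k / ν ^ (-r / 2) * studentProfile A r x := by
  have hq : 0 < x ⬝ᵥ A *ᵥ x := hA.dotProduct_mulVec_pos hx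
  rw [studentDensity_smul, mul_left_comm, studentProfile, div_mul_eq_mul_div, mul_div_assoc,
    ← Real.div_rpow hq.le hν.le]
  exact mul_le_mul_of_nonneg_left (Real.rpow_mul_one_add_sq_mul_rpow_le ht (div_pos hq hν) hr) hk

variable {μ : Measure (n → ℝ)} [μ.IsAddHaarMeasure]

theorem integrableOn_studentProfile (hA : A.PosDef) (hr : (Fintype.card n : ℝ) < r) :
    IntegrableOn (studentProfile A r) {x | 1 ≤ ‖x‖} μ := by
  obtain ⟨c, hc, hcA⟩ := hA.exists_pos_mul_sq_norm_le
  exact integrableOn_rpow_neg_of_mul_sq_norm_le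
    (continuous_dotProduct_mulVec_self A).measurable hc hcA
    (by rwa [Module.finrank_fintype_fun_eq_card])

theorem setIntegral_studentProfile_pos [Nonempty n] (hA : A.PosDef)
    (hr : (Fintype.card n : ℝ) < r) :
    0 < ∫ x in {x | 1 ≤ ‖x‖}, studentProfile A r x ∂μ := by
  have hC : MeasurableSet {x : n → ℝ | 1 ≤ ‖x‖} :=
    measurableSet_le measurable_const measurable_norm
  have hpos : ∀ x ∈ {x : n → ℝ | 1 ≤ ‖x‖}, 0 < studentProfile A r x := fun x hx =>
    studentProfile_pos hA (norm_pos_iff.mp (one_pos.trans_le hx))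
  rw [setIntegral_pos_iff_support_of_nonneg_ae
    ((ae_restrict_iff' hC).mpr (Eventually.of_forall fun x hx => (hpos x hx).le))
    (integrableOn_studentProfile hA hr)]
  have hopen : 0 < μ {x : n → ℝ | 1 < ‖x‖} :=
    (isOpen_lt continuous_const continuous_norm).measure_pos μ
      ⟨fun _ => 2, by simp [pi_norm_const]⟩
  exact hopen.trans_le <| measure_mono fun x (hx : 1 < ‖x‖) => ⟨(hpos x hx.le).ne', hx.le⟩

theorem tendsto_rpow_mul_setIntegral_studentDensity_smul (hA : A.PosDef) (hν : 0 < ν)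
    (hk : 0 ≤ k) (hr : (Fintype.card n : ℝ) < r) {B : Set (n → ℝ)} (hB : B ⊆ {x | 1 ≤ ‖x‖})
    (hBm : MeasurableSet B) :
    Tendsto (fun t : ℝ => t ^ r * ∫ x in B, studentDensity A ν k r (t • x) ∂μ) atTop
      (𝓝 (k / ν ^ (-r / 2) * ∫ x in B, studentProfile A r x ∂μ)) := by
  have hr0 : 0 ≤ r := (Nat.cast_nonneg _).trans hr.le
  have hne : ∀ x ∈ B, x ≠ 0 := fun x hx => norm_pos_iff.mp (one_pos.trans_le (hB hx))
  simp_rw [← integral_const_mul]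
  refine tendsto_integral_filter_of_dominated_convergence
    (fun x => k / ν ^ (-r / 2) * studentProfile A r x)
    (Eventually.of_forall fun t => ((measurable_studentDensity.comp
      (measurable_const_smul t)).const_mul _).aestronglyMeasurable) ?_
    (((integrableOn_studentProfile hA hr).mono_set hB).const_mul _) ?_
  · filter_upwards [eventually_gt_atTop 0] with t ht
    refine (ae_restrict_iff' hBm).mpr (Eventually.of_forall fun x hx => ?_)
    rw [Real.norm_of_nonneg (mul_nonneg (by positivity)
      (studentDensity_nonneg hA.posSemidef hν.le hk _))]
    exact rpow_mul_studentDensity_smul_le hA hν hk hr0 ht (hne x hx)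
  · exact (ae_restrict_iff' hBm).mpr (Eventually.of_forall fun x hx =>
      tendsto_rpow_mul_studentDensity_smul hA hν (hne x hx))

end Student

/-- Limiting density of a multivariate Student distribution: for the
`d`-dimensional Student `t` density `f_X(x) = k (1 + xᵀΣ⁻¹x/ν)^{−(ν+d)/2}`,
`f_X(tx)/f_X(t·1) → v(x)/v(1)` with `v(x) = (xᵀΣ⁻¹x)^{−(ν+d)/2}`, `v` is integrable on
`C = {x : ‖x‖_∞ ≥ 1}`, the conditional density of `X/t` given `‖X‖_∞ ≥ t` converges
pointwise to `f_Y = v/∫_C v`, `f_Y` is homogeneous of order `−ν−d`, and `X` is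
multivariate regularly varying (of index `−ν`) with limiting density `f_Y`. -/
theorem student_limiting_density {d : ℕ} (hd : 0 < d)
    (ν k : ℝ) (hν : 0 < ν) (hk : 0 < k)
    (S : Matrix (Fin d) (Fin d) ℝ) (hS : S.PosDef)
    (fX : (Fin d → ℝ) → ℝ)
    (hfX : ∀ x, fX x = k * (1 + dotProduct x (S⁻¹.mulVec x) / ν) ^ (-(ν + d) / 2))
    (v : (Fin d → ℝ) → ℝ)
    (hv : ∀ x, v x = dotProduct x (S⁻¹.mulVec x) ^ (-(ν + d) / 2))
    (C : Set (Fin d → ℝ)) (hC : C = {x | 1 ≤ ‖x‖}) :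
    (∀ x : Fin d → ℝ, x ≠ 0 →
      Tendsto (fun t : ℝ => fX (t • x) / fX (t • (1 : Fin d → ℝ))) atTop
        (𝓝 (v x / v 1))) ∧
    IntegrableOn v C ∧
    (∀ y ∈ C,
      Tendsto (fun t : ℝ => fX (t • y) / ∫ x in C, fX (t • x)) atTop
        (𝓝 (v y / ∫ x in C, v x))) ∧
    (∀ lam : ℝ, 1 ≤ lam → ∀ y ∈ C,
      v (lam • y) / ∫ x in C, v x =
        lam ^ (-ν - d) * (v y / ∫ x in C, v x)) ∧
    (∀ B : Set (Fin d → ℝ), B ⊆ C → MeasurableSet B →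
      Tendsto (fun t : ℝ => (∫ x in B, fX (t • x)) / ∫ x in C, fX (t • x)) atTop
        (𝓝 (∫ x in B, v x / ∫ x' in C, v x'))) := by
  have : Nonempty (Fin d) := ⟨⟨0, hd⟩⟩
  obtain rfl : fX = studentDensity S⁻¹ ν k (ν + d) := funext hfX
  obtain rfl : v = studentProfile S⁻¹ (ν + d) := funext hv
  subst hC
  have hA := hS.inv
  have hr : (Fintype.card (Fin d) : ℝ) < ν + d := by simpa using hν
  have hc : k / ν ^ (-(ν + d) / 2) ≠ 0 := by positivity
  have hscale : ∀ᶠ t : ℝ in atTop, t ^ (ν + d) ≠ 0 :=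
    (eventually_gt_atTop 0).mono fun t ht => (Real.rpow_pos_of_pos ht _).ne'
  have hIC := (setIntegral_studentProfile_pos (μ := volume) hA hr).ne'
  have hlimC := tendsto_rpow_mul_setIntegral_studentDensity_smul (μ := volume) hA hν hk.le hr
    subset_rfl (measurableSet_le measurable_const measurable_norm)
  refine ⟨fun x hx => ?_, integrableOn_studentProfile hA hr, fun y hy => ?_,
    fun lam hlam y _ => ?_, fun B hB hBm => ?_⟩
  · exact (tendsto_rpow_mul_studentDensity_smul hA hν hx).div_of_mul_left
      (tendsto_rpow_mul_studentDensity_smul hA hν one_ne_zero) hscale hc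
      (studentProfile_pos hA one_ne_zero).ne'
  · exact (tendsto_rpow_mul_studentDensity_smul hA hν (norm_pos_iff.mp (one_pos.trans_le hy)))
      |>.div_of_mul_left hlimC hscale hc hIC
  · rw [studentProfile_smul hA.posSemidef (by linarith), mul_div_assoc, neg_add']
  · rw [integral_div]
    exact (tendsto_rpow_mul_setIntegral_studentDensity_smul hA hν hk.le hr hB hBm).div_of_mul_left
      hlimC hscale hc hIC
end

section
/- Let X ∈ RV_{−α}(Y) on C = {x ∈ ℝ^d : ‖x‖_∞ ≥ 1}, i.e. the conditional law of X/t given ‖X‖_∞ ≥ t converges weakly to the law of Y on C, and assume Pr(bX_i ≥ t | ‖X‖_∞ ≥ t) → c_{bi} > 0 for each coordinate i and each sign b ∈ {−1, 1}. Then for every nonempty A ⊆ {1,…,d}, the sub-vector X_A is multivariate regularly varying on C^A = {x_A ∈ ℝ^{|A|} : ‖x_A‖_∞ ≥ 1} with index −α and limiting distribution equal to the conditional law of Y_A given ‖Y_A‖_∞ ≥ 1. -/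
open Filter Topology MeasureTheory ProbabilityTheory

/-
Every continuous `f` with `f (s • x) = s * f x` (a coordinate, or the norm of `x_A`) has a
`ν`-null level set `{f = 1}`: by homogeneity the scaled copies `s • ({f = 1} ∩ C)`, `s ≥ 1`, lie in
the disjoint levels `{f = s}` and have mass `s ^ (-α) ν ({f = 1} ∩ C)`, while a finite measure has
only countably many levels of positive mass. Hence `{‖x_A‖ ≥ 1}` and `{x_{i₀} ≥ 1}` are
`ν`-continuity sets, so the tails of `‖X_A‖` and `X_{i₀}` are comparable with that of `‖X‖`, with
ratios `ν {‖x_A‖ ≥ 1} ≥ ν {x_{i₀} ≥ 1} = c_{1 i₀} > 0` for any `i₀ ∈ A`. Dividing the convergence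
for `{x_A ∈ B}` by the one for `{‖x_A‖ ≥ 1}` gives the claim.
-/

theorem cond_map_apply_of_subset {α β : Type*} [MeasurableSpace α] [MeasurableSpace β]
    {μ : Measure α} {π : α → β} (hπ : Measurable π) {s B : Set β} (hs : MeasurableSet s)
    (hB : MeasurableSet B) (hBs : B ⊆ s) :
    (μ.map π)[|s] B = (μ (π ⁻¹' s))⁻¹ * μ (π ⁻¹' B) := by
  rw [cond_apply hs, Set.inter_eq_self_of_subset_right hBs, Measure.map_apply hπ hs,
    Measure.map_apply hπ hB]

theorem Filter.Tendsto.div_of_common_denom {ι : Type*} {l : Filter ι} {N D Z : ι → ℝ} {a b : ℝ}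
    (hN : Tendsto (fun t => N t / Z t) l (𝓝 a)) (hD : Tendsto (fun t => D t / Z t) l (𝓝 b))
    (hb : b ≠ 0) (hZ : ∀ t, Z t ≠ 0) : Tendsto (fun t => N t / D t) l (𝓝 (a / b)) :=
  (hN.div hD hb).congr fun t => div_div_div_cancel_right₀ (hZ t) _ _

section Homogeneous

variable {E : Type*} [NormedAddCommGroup E] [NormedSpace ℝ E] [MeasurableSpace E] [BorelSpace E]

def IsTailHomogeneous (ν : Measure E) (α : ℝ) : Prop :=
  ∀ lam : ℝ, 1 ≤ lam → ∀ B : Set E, MeasurableSet B → B ⊆ {x | 1 ≤ ‖x‖} →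
    ν ((fun x => lam • x) '' B) = ENNReal.ofReal (lam ^ (-α)) * ν B

def IsPosHomogeneous (f : E → ℝ) : Prop :=
  ∀ s : ℝ, 0 < s → ∀ x, f (s • x) = s * f x

variable {ν : Measure E} [IsFiniteMeasure ν] {α : ℝ} {f : E → ℝ}

theorem IsTailHomogeneous.measure_level_one_inter_eq_zero (hν : IsTailHomogeneous ν α)
    (hf : Measurable f) (hf_hom : IsPosHomogeneous f) :
    ν ({x | f x = 1} ∩ {x | 1 ≤ ‖x‖}) = 0 := by
  set L := {x | f x = 1} ∩ {x : E | 1 ≤ ‖x‖}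
  by_contra hL
  have hL_meas : MeasurableSet L :=
    (measurableSet_eq_fun hf measurable_const).inter
      (measurableSet_le measurable_const measurable_norm)
  have hlevels : Set.Ici (1 : ℝ) ⊆ {s | 0 < ν {x | f x = s}} := by
    intro s hs
    have hs₀ : 0 < s := one_pos.trans_le hs
    have hsub : (fun x => s • x) '' L ⊆ {x | f x = s} := by
      rintro _ ⟨x, ⟨hx, -⟩, rfl⟩
      simp only [Set.mem_ofPred_eq, hf_hom s hs₀, hx.out, mul_one]
    calc 0 < ENNReal.ofReal (s ^ (-α)) * ν L :=
          ENNReal.mul_pos (ENNReal.ofReal_pos.mpr (Real.rpow_pos_of_pos hs₀ _)).ne' hL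
      _ = ν ((fun x => s • x) '' L) := (hν s hs L hL_meas Set.inter_subset_right).symm
      _ ≤ _ := measure_mono hsub
  have hnull := ((Measure.countable_meas_level_set_pos hf).mono hlevels).measure_zero volume
  exact ENNReal.top_ne_zero (Real.volume_Ici ▸ hnull)

theorem IsTailHomogeneous.measure_frontier_superlevel_eq_zero (hν : IsTailHomogeneous ν α)
    (hsupp : ν {x | ‖x‖ < 1} = 0) (hf : Continuous f) (hf_hom : IsPosHomogeneous f) :
    ν (frontier {x | 1 ≤ f x}) = 0 := by
  refine measure_mono_null (fun x hx => ?_)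
    (measure_union_null (hν.measure_level_one_inter_eq_zero hf.measurable hf_hom) hsupp)
  have hfx : 1 = f x := frontier_le_subset_eq continuous_const hf hx
  rcases le_or_gt 1 ‖x‖ with h | h
  · exact Or.inl ⟨hfx.symm, h⟩
  · exact Or.inr h

end Homogeneous

section TailLaw

variable {E F Ω : Type*} [NormedAddCommGroup E] [NormedSpace ℝ E] [MeasurableSpace E]
  [BorelSpace E] [MeasurableSpace Ω]

def TendstoTailLaw (P : Measure Ω) (X : Ω → E) (ν : Measure E) : Prop :=
  ∀ B : Set E, MeasurableSet B → B ⊆ {x | 1 ≤ ‖x‖} → ν (frontier B) = 0 →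
    Tendsto (fun t => (P {ω | t⁻¹ • X ω ∈ B}).toReal / (P {ω | t ≤ ‖X ω‖}).toReal) atTop
      (𝓝 (ν B).toReal)

variable {P : Measure Ω} {X : Ω → E} {ν : Measure E} [IsFiniteMeasure ν] {α : ℝ}

theorem TendstoTailLaw.tendsto_superlevel (hX : TendstoTailLaw P X ν)
    (hν : IsTailHomogeneous ν α) (hsupp : ν {x | ‖x‖ < 1} = 0) {f : E → ℝ} (hf : Continuous f)
    (hf_hom : IsPosHomogeneous f) (hf_le : ∀ x, f x ≤ ‖x‖) :
    Tendsto (fun t => (P {ω | t ≤ f (X ω)}).toReal / (P {ω | t ≤ ‖X ω‖}).toReal) atTop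
      (𝓝 (ν {x | 1 ≤ f x}).toReal) := by
  refine (hX _ (measurableSet_le measurable_const hf.measurable)
    (fun x hx => hx.out.trans (hf_le x))
    (hν.measure_frontier_superlevel_eq_zero hsupp hf hf_hom)).congr' ?_
  filter_upwards [eventually_gt_atTop 0] with t ht
  simp only [hf_hom _ (inv_pos.mpr ht), le_inv_mul_iff₀ ht, mul_one]

theorem TendstoTailLaw.map_of_measure_pos [NormedAddCommGroup F] [NormedSpace ℝ F]
    [MeasurableSpace F] [BorelSpace F] [IsFiniteMeasure P] (hX : TendstoTailLaw P X ν)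
    (hpos : ∀ t : ℝ, 0 < P {ω | t ≤ ‖X ω‖}) (hν : IsTailHomogeneous ν α)
    (hsupp : ν {x | ‖x‖ < 1} = 0) (π : E →L[ℝ] F) (hπ : ∀ x, ‖π x‖ ≤ ‖x‖)
    (hπν : 0 < ν {x | 1 ≤ ‖π x‖}) :
    TendstoTailLaw P (fun ω => π (X ω)) ((ν.map π)[|{y | 1 ≤ ‖y‖}]) := by
  intro B hB hBC hBfr
  have hC : IsClosed {y : F | 1 ≤ ‖y‖} := isClosed_le continuous_const continuous_norm
  have hfr : ν (frontier (π ⁻¹' B)) = 0 := by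
    rw [cond_map_apply_of_subset π.measurable hC.measurableSet isClosed_frontier.measurableSet
      (frontier_subset_closure.trans (closure_minimal hBC hC)), mul_eq_zero,
      ENNReal.inv_eq_zero] at hBfr
    exact measure_mono_null (π.continuous.frontier_preimage_subset B)
      (hBfr.resolve_left (measure_ne_top _ _))
  have hnum := hX (π ⁻¹' B) (π.measurable hB) (fun x hx => (hBC hx).out.trans (hπ x)) hfr
  have hden := hX.tendsto_superlevel hν hsupp π.continuous.norm
    (fun s hs x => by rw [map_smul, norm_smul, Real.norm_of_nonneg hs.le]) hπ
  rw [cond_map_apply_of_subset π.measurable hC.measurableSet hB hBC, ENNReal.toReal_mul,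
    ENNReal.toReal_inv, inv_mul_eq_div]
  refine (hnum.div_of_common_denom hden (ENNReal.toReal_pos hπν.ne' (measure_ne_top _ _)).ne'
    fun t => (ENNReal.toReal_pos (hpos t).ne' (measure_ne_top _ _)).ne').congr fun t => ?_
  simp only [Set.mem_preimage, map_smul]

end TailLaw

theorem marginals_regular_variation_general {d : ℕ} {Ω : Type*} [MeasurableSpace Ω]
    (P : Measure Ω) [IsProbabilityMeasure P] (α : ℝ)
    (X : Ω → (Fin d → ℝ))
    (hpos : ∀ t : ℝ, 0 < P {ω | t ≤ ‖X ω‖})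
    (ν : Measure (Fin d → ℝ)) [IsProbabilityMeasure ν]
    (hν_supp : ν {x | ‖x‖ < 1} = 0)
    (hν_hom : ∀ lam : ℝ, 1 ≤ lam → ∀ B : Set (Fin d → ℝ), MeasurableSet B →
      B ⊆ {x | 1 ≤ ‖x‖} →
      ν ((fun x => lam • x) '' B) = ENNReal.ofReal (lam ^ (-α)) * ν B)
    (hconv : ∀ B : Set (Fin d → ℝ), MeasurableSet B → B ⊆ {x | 1 ≤ ‖x‖} →
      ν (frontier B) = 0 →
      Tendsto (fun t => (P {ω | t⁻¹ • X ω ∈ B}).toReal / (P {ω | t ≤ ‖X ω‖}).toReal)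
        atTop (𝓝 (ν B).toReal))
    (hmarg : ∀ i : Fin d, ∀ b : ℝ, b = 1 ∨ b = -1 →
      ∃ c : ℝ, 0 < c ∧
        Tendsto (fun t => (P {ω | t ≤ b * X ω i ∧ t ≤ ‖X ω‖}).toReal /
            (P {ω | t ≤ ‖X ω‖}).toReal) atTop (𝓝 c)) :
    ∀ A : Finset (Fin d), A.Nonempty →
      -- the limiting law of the sub-vector: `ν_A` conditioned on `‖·‖_∞ ≥ 1`
      ∀ B : Set (↥A → ℝ), MeasurableSet B →
        B ⊆ {x | 1 ≤ ‖x‖} →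
        ((ν.map fun x (i : ↥A) => x i.1)[|{x | 1 ≤ ‖x‖}]) (frontier B) = 0 →
        Tendsto (fun t =>
            (P {ω | (t⁻¹ • fun i : ↥A => X ω i.1) ∈ B}).toReal /
            (P {ω | t ≤ ‖fun i : ↥A => X ω i.1‖}).toReal)
          atTop
          (𝓝 ((((ν.map fun x (i : ↥A) => x i.1)[|{x | 1 ≤ ‖x‖}]) B).toReal)) := by
  rintro A ⟨i₀, hi₀⟩
  have hX : TendstoTailLaw P X ν := hconv
  let π : (Fin d → ℝ) →L[ℝ] (↥A → ℝ) := ContinuousLinearMap.pi fun i => ContinuousLinearMap.proj i.1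
  have hπ : ∀ x, ‖π x‖ ≤ ‖x‖ := fun x =>
    (pi_norm_le_iff_of_nonneg (norm_nonneg x)).mpr fun i => norm_le_pi_norm x i.1
  have hcoord_le : ∀ x : Fin d → ℝ, x i₀ ≤ ‖x‖ := fun x =>
    (le_abs_self _).trans (norm_le_pi_norm x i₀)
  obtain ⟨c, hc, hlim⟩ := hmarg i₀ 1 (Or.inl rfl)
  have hcoord : (ν {x | 1 ≤ x i₀}).toReal = c := by
    refine tendsto_nhds_unique (hX.tendsto_superlevel hν_hom hν_supp (continuous_apply i₀)
      (fun s _ x => rfl) hcoord_le) ?_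
    have htail : ∀ (t : ℝ) ω, t ≤ X ω i₀ → t ≤ ‖X ω‖ := fun t ω h => h.trans (hcoord_le _)
    simpa only [one_mul, fun t ω => and_iff_left_of_imp (htail t ω)] using hlim
  have hπν : 0 < ν {x | 1 ≤ ‖π x‖} :=
    (ENNReal.toReal_pos_iff.mp (hcoord ▸ hc)).1.trans_le <| measure_mono fun x hx =>
      hx.out.trans ((le_abs_self _).trans (norm_le_pi_norm (π x) ⟨i₀, hi₀⟩))
  exact hX.map_of_measure_pos hpos hν_hom hν_supp π hπ hπν

/-- Regular variation of the marginals: if `X ∈ RV_{−α}(ν)` on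
`C = {‖x‖_∞ ≥ 1}` (where the limit `ν` is homogeneous of order `−α`), and
`Pr(bX_i ≥ t | ‖X‖_∞ ≥ t) → c_{bi} > 0` for each coordinate `i` and sign `b ∈ {−1,1}`,
then for every nonempty `A ⊆ {1,…,d}` the sub-vector `X_A` is multivariate regularly
varying on `C^A` with index `−α`, with limit the conditional law of `ν_A` given
`‖·‖_∞ ≥ 1`. Here the sup norm is the norm of the pi type `Fin d → ℝ`. -/
theorem marginals_regular_variation {d : ℕ} {Ω : Type*} [MeasurableSpace Ω]
    (P : Measure Ω) [IsProbabilityMeasure P] (α : ℝ) (hα : 0 < α)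
    (X : Ω → (Fin d → ℝ)) (hX : Measurable X)
    (hpos : ∀ t : ℝ, 0 < P {ω | t ≤ ‖X ω‖})
    (ν : Measure (Fin d → ℝ)) [IsProbabilityMeasure ν]
    (hν_supp : ν {x | ‖x‖ < 1} = 0)
    (hν_hom : ∀ lam : ℝ, 1 ≤ lam → ∀ B : Set (Fin d → ℝ), MeasurableSet B →
      B ⊆ {x | 1 ≤ ‖x‖} →
      ν ((fun x => lam • x) '' B) = ENNReal.ofReal (lam ^ (-α)) * ν B)
    (hconv : ∀ B : Set (Fin d → ℝ), MeasurableSet B → B ⊆ {x | 1 ≤ ‖x‖} →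
      ν (frontier B) = 0 →
      Tendsto (fun t => (P {ω | t⁻¹ • X ω ∈ B}).toReal / (P {ω | t ≤ ‖X ω‖}).toReal)
        atTop (𝓝 (ν B).toReal))
    (hmarg : ∀ i : Fin d, ∀ b : ℝ, b = 1 ∨ b = -1 →
      ∃ c : ℝ, 0 < c ∧
        Tendsto (fun t => (P {ω | t ≤ b * X ω i ∧ t ≤ ‖X ω‖}).toReal /
            (P {ω | t ≤ ‖X ω‖}).toReal) atTop (𝓝 c)) :
    ∀ A : Finset (Fin d), A.Nonempty →
      -- the limiting law of the sub-vector: `ν_A` conditioned on `‖·‖_∞ ≥ 1`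
      ∀ B : Set (↥A → ℝ), MeasurableSet B →
        B ⊆ {x | 1 ≤ ‖x‖} →
        ((ν.map fun x (i : ↥A) => x i.1)[|{x | 1 ≤ ‖x‖}]) (frontier B) = 0 →
        Tendsto (fun t =>
            (P {ω | (t⁻¹ • fun i : ↥A => X ω i.1) ∈ B}).toReal /
            (P {ω | t ≤ ‖fun i : ↥A => X ω i.1‖}).toReal)
          atTop
          (𝓝 ((((ν.map fun x (i : ↥A) => x i.1)[|{x | 1 ≤ ‖x‖}]) B).toReal)) :=
  marginals_regular_variation_general P α X hpos ν hν_supp hν_hom hconv hmarg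
end
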